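/- Fix m ≥ 3 and let μ be a Borel probability measure on ℝ² absolutely continuous with respect to Lebesgue measure. Let X ⊆ ℝ² have nonempty interior, and let u ∈ Δ^m satisfy u_z > 0 for all z and max_z u_z < 1 − δ(μ). Then there exist x^{(1)},…,x^{(m)} ∈ X such that μ(A^{(z)}(x)) = u_z for every z ∈ {1,…,m}. -/

import Mathlib

open Finset MeasureTheory
open scoped RealInnerProductSpace

/-- The probability simplex Δ^m. -/
def simplex (m : ℕ) : Set (Fin m → ℝ) :=
  {u | (∀ z, 0 ≤ u z) ∧ ∑ z, u z = 1}

/-- Halfspace depth of the origin: δ(μ) = inf over v ≠ 0 of μ({θ : ⟨θ,v⟩ ≥ 0}). -/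
noncomputable def depth (μ : Measure (EuclideanSpace ℝ (Fin 2))) : ℝ :=
  sInf {r | ∃ v : EuclideanSpace ℝ (Fin 2), v ≠ 0 ∧
    r = (μ {θ | 0 ≤ ⟪θ, v⟫}).toReal}

/-- The cone A^{(z)}(x) of linear classifiers consistent with answer z to the
question x = (x^{(1)},…,x^{(m)}). -/
def cone {m : ℕ} (x : Fin m → EuclideanSpace ℝ (Fin 2)) (z : Fin m) :
    Set (EuclideanSpace ℝ (Fin 2)) :=
  {θ | (∀ i, z < i → ⟪θ, x i⟫ ≤ ⟪θ, x z⟫) ∧ (∀ i, i < z → ⟪θ, x i⟫ < ⟪θ, x z⟫)}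

namespace HSAux
open Real Set

/-- A periodic-CDF-like function. -/
structure NiceF (F : ℝ → ℝ) : Prop where
  mono : Monotone F
  cont : Continuous F
  per : ∀ t, F (t + 2*π) = F t + 1

variable {F : ℝ → ℝ}

theorem NiceF.per_nat (hF : NiceF F) (t : ℝ) : ∀ n : ℕ, F (t + n * (2*π)) = F t + n := by
  intro n
  induction n with
  | zero => simp
  | succ n ih =>
      have : t + (n+1 : ℕ) * (2*π) = (t + n * (2*π)) + 2*π := by push_cast; ring
      rw [this, hF.per, ih]; push_cast; ring

theorem NiceF.per_nat_sub (hF : NiceF F) (t : ℝ) (n : ℕ) : F (t - n * (2*π)) = F t - n := by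
  have := hF.per_nat (t - n * (2*π)) n
  simp at this
  linarith

theorem NiceF.per_int (hF : NiceF F) (t : ℝ) (k : ℤ) : F (t + k * (2*π)) = F t + k := by
  rcases k with n | n
  · have h := hF.per_nat t n
    push_cast
    push_cast at h
    exact h
  · have h := hF.per_nat_sub t (n+1)
    rw [Int.negSucc_eq]
    push_cast
    push_cast at h
    rw [show t + -((n:ℝ)+1) * (2*π) = t - ((n:ℝ)+1) * (2*π) by ring]
    rw [h]
    ring

theorem NiceF.lt_of_flt (hF : NiceF F) {s t : ℝ} (h : F s < F t) : s < t := by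
  by_contra h'
  exact absurd (hF.mono (not_lt.mp h')) (not_le.mpr h)

/-- the set of points at level ≥ c -/
theorem NiceF.exists_ge (hF : NiceF F) (c : ℝ) : ∃ t, c ≤ F t := by
  obtain ⟨n, hn⟩ := exists_nat_ge (c - F 0)
  exact ⟨0 + n * (2*π), by rw [hF.per_nat 0 n]; linarith⟩

theorem NiceF.exists_le (hF : NiceF F) (c : ℝ) : ∃ t, F t ≤ c := by
  obtain ⟨n, hn⟩ := exists_nat_ge (F 0 - c)
  refine ⟨0 - n * (2*π), ?_⟩
  rw [hF.per_nat_sub 0 n]; linarith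

theorem NiceF.bddBelow_ge (hF : NiceF F) (c : ℝ) : BddBelow {t | c ≤ F t} := by
  obtain ⟨s, hs⟩ := hF.exists_le (c - 1)
  exact ⟨s, fun t ht => le_of_lt (hF.lt_of_flt (by simp only [mem_setOf_eq] at ht; linarith))⟩

theorem NiceF.bddAbove_le (hF : NiceF F) (c : ℝ) : BddAbove {t | F t ≤ c} := by
  obtain ⟨s, hs⟩ := hF.exists_ge (c + 1)
  exact ⟨s, fun t ht => le_of_lt (hF.lt_of_flt (by simp only [mem_setOf_eq] at ht; linarith))⟩

noncomputable def qlo (F : ℝ → ℝ) (c : ℝ) : ℝ := sInf {t | c ≤ F t}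
noncomputable def qhi (F : ℝ → ℝ) (c : ℝ) : ℝ := sSup {t | F t ≤ c}

theorem NiceF.nonempty_ge (hF : NiceF F) (c : ℝ) : {t | c ≤ F t}.Nonempty := hF.exists_ge c
theorem NiceF.nonempty_le (hF : NiceF F) (c : ℝ) : {t | F t ≤ c}.Nonempty := hF.exists_le c

theorem NiceF.F_qlo (hF : NiceF F) (c : ℝ) : F (qlo F c) = c := by
  have hcl : IsClosed {t | c ≤ F t} := isClosed_le continuous_const hF.cont
  have hmem : qlo F c ∈ {t | c ≤ F t} := hcl.csInf_mem (hF.nonempty_ge c) (hF.bddBelow_ge c)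
  refine le_antisymm ?_ hmem
  by_contra h
  push_neg at h
  have hopen : IsOpen {t | c < F t} := isOpen_lt continuous_const hF.cont
  obtain ⟨ε, hε, hball⟩ := Metric.mem_nhds_iff.mp (hopen.mem_nhds h)
  have h2 : qlo F c - ε/2 ∈ {t | c < F t} := by
    apply hball
    simp only [Metric.mem_ball, Real.dist_eq]
    rw [abs_of_nonpos (by linarith)]
    linarith
  have h3 : qlo F c ≤ qlo F c - ε/2 :=
    csInf_le (hF.bddBelow_ge c) (show qlo F c - ε/2 ∈ {t | c ≤ F t} from le_of_lt (show _ < F _ from h2))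
  linarith

theorem NiceF.F_qhi (hF : NiceF F) (c : ℝ) : F (qhi F c) = c := by
  have hcl : IsClosed {t | F t ≤ c} := isClosed_le hF.cont continuous_const
  have hmem : qhi F c ∈ {t | F t ≤ c} := hcl.csSup_mem (hF.nonempty_le c) (hF.bddAbove_le c)
  refine le_antisymm hmem ?_
  by_contra h
  push_neg at h
  have hopen : IsOpen {t | F t < c} := isOpen_lt hF.cont continuous_const
  obtain ⟨ε, hε, hball⟩ := Metric.mem_nhds_iff.mp (hopen.mem_nhds h)
  have h2 : qhi F c + ε/2 ∈ {t | F t < c} := by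
    apply hball
    simp only [Metric.mem_ball, Real.dist_eq]
    rw [abs_of_nonneg (by linarith)]
    linarith
  have h3 : qhi F c + ε/2 ≤ qhi F c :=
    le_csSup (hF.bddAbove_le c) (show qhi F c + ε/2 ∈ {t | F t ≤ c} from le_of_lt (show F _ < _ from h2))
  linarith

theorem NiceF.qlo_le_qhi (hF : NiceF F) (c : ℝ) : qlo F c ≤ qhi F c :=
  le_csSup (hF.bddAbove_le c) (le_of_eq (hF.F_qlo c))

theorem NiceF.qhi_lt_qlo (hF : NiceF F) {c c' : ℝ} (h : c < c') : qhi F c < qlo F c' := by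
  have hle : qhi F c ≤ qlo F c' := by
    apply csSup_le (hF.nonempty_le c)
    intro s hs
    apply le_csInf (hF.nonempty_ge c')
    intro t ht
    simp only [mem_setOf_eq] at hs ht
    by_contra h'
    push_neg at h'
    have := hF.mono (le_of_lt h')
    linarith
  rcases lt_or_eq_of_le hle with h' | h'
  · exact h'
  · exfalso
    have := hF.F_qhi c
    rw [h', hF.F_qlo c'] at this
    linarith

theorem NiceF.qhi_mono (hF : NiceF F) {c c' : ℝ} (h : c ≤ c') : qhi F c ≤ qhi F c' :=
  csSup_le_csSup (hF.bddAbove_le c') (hF.nonempty_le c) (fun t ht => le_trans ht h)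

theorem NiceF.qlo_mono (hF : NiceF F) {c c' : ℝ} (h : c ≤ c') : qlo F c ≤ qlo F c' :=
  le_csInf (hF.nonempty_ge c') (fun t ht => csInf_le (hF.bddBelow_ge c) (le_trans h ht))

theorem NiceF.qlo_add_one (hF : NiceF F) (c : ℝ) : qlo F (c + 1) = qlo F c + 2*π := by
  apply le_antisymm
  · refine csInf_le (hF.bddBelow_ge (c+1)) ?_
    have : F (qlo F c + 2*π) = c + 1 := by rw [hF.per, hF.F_qlo]
    exact this.ge
  · have : qlo F c ≤ qlo F (c+1) - 2*π := by
      apply csInf_le (hF.bddBelow_ge c)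
      have : F (qlo F (c+1) - 2*π) = c := by
        have := hF.per (qlo F (c+1) - 2*π)
        simp at this
        rw [hF.F_qlo] at this
        linarith
      simp only [mem_setOf_eq, this, le_refl]
    linarith

theorem NiceF.qhi_add_one (hF : NiceF F) (c : ℝ) : qhi F (c + 1) = qhi F c + 2*π := by
  apply le_antisymm
  · have : qhi F (c+1) - 2*π ≤ qhi F c := by
      apply le_csSup (hF.bddAbove_le c)
      have : F (qhi F (c+1) - 2*π) = c := by
        have := hF.per (qhi F (c+1) - 2*π)
        simp at this
        rw [hF.F_qhi] at this
        linarith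
      simp only [mem_setOf_eq, this, le_refl]
    linarith
  · refine le_csSup (hF.bddAbove_le (c+1)) ?_
    have : F (qhi F c + 2*π) = c + 1 := by rw [hF.per, hF.F_qhi]
    exact this.le

theorem NiceF.le_qhi_self (hF : NiceF F) (b : ℝ) : b ≤ qhi F (F b) :=
  le_csSup (hF.bddAbove_le (F b)) (le_refl (F b))

theorem NiceF.qlo_le_self (hF : NiceF F) (b : ℝ) : qlo F (F b) ≤ b :=
  csInf_le (hF.bddBelow_ge (F b)) (le_refl (F b))

theorem NiceF.gt_of_gt_qhi (hF : NiceF F) {c t : ℝ} (h : qhi F c < t) : c < F t := by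
  by_contra h'
  push_neg at h'
  exact absurd (le_csSup (hF.bddAbove_le c) h') (not_le.mpr h)

theorem NiceF.lt_of_lt_qlo (hF : NiceF F) {c t : ℝ} (h : t < qlo F c) : F t < c := by
  by_contra h'
  push_neg at h'
  exact absurd (csInf_le (hF.bddBelow_ge c) h') (not_le.mpr h)

/-- right continuity style bound for qhi -/
theorem NiceF.qhi_rightcont (hF : NiceF F) {c X : ℝ} (h : ∀ ε > 0, X ≤ qhi F (c + ε)) :
    X ≤ qhi F c := by
  by_contra h'
  push_neg at h'
  set t0 := (qhi F c + X)/2 with ht0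
  have h1 : qhi F c < t0 := by rw [ht0]; linarith
  have h2 : t0 < X := by rw [ht0]; linarith
  have h3 : c < F t0 := hF.gt_of_gt_qhi h1
  have h4 := h ((F t0 - c)/2) (by linarith)
  have h5 : t0 < qhi F (c + (F t0 - c)/2) := lt_of_lt_of_le h2 h4
  have h6 : F t0 ≤ c + (F t0 - c)/2 := by
    have := hF.mono (le_of_lt h5)
    rw [hF.F_qhi] at this
    exact this
  linarith

theorem NiceF.qlo_leftcont (hF : NiceF F) {c X : ℝ} (h : ∀ ε > 0, qlo F (c - ε) ≤ X) :
    qlo F c ≤ X := by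
  by_contra h'
  push_neg at h'
  set t0 := (X + qlo F c)/2 with ht0
  have h1 : t0 < qlo F c := by rw [ht0]; linarith
  have h2 : X < t0 := by rw [ht0]; linarith
  have h3 : F t0 < c := hF.lt_of_lt_qlo h1
  have h4 := h ((c - F t0)/2) (by linarith)
  have h5 : qlo F (c - (c - F t0)/2) < t0 := lt_of_le_of_lt h4 h2
  have h6 : c - (c - F t0)/2 ≤ F t0 := by
    have := hF.mono (le_of_lt h5)
    rw [hF.F_qlo] at this
    exact this
  linarith

section Cuts

variable {m : ℕ} {uu : ℕ → ℝ}

/-- partial sums -/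
def V (uu : ℕ → ℝ) : ℕ → ℝ
  | 0 => 0
  | n+1 => V uu n + uu n

structure NiceU (m : ℕ) (uu : ℕ → ℝ) : Prop where
  m3 : 3 ≤ m
  pos : ∀ z, 0 < uu z
  per : ∀ z, uu (z + m) = uu z
  sum1 : V uu m = 1

theorem NiceU.V_lt (hu : NiceU m uu) (z : ℕ) : V uu z < V uu (z+1) := by
  have := hu.pos z
  simp only [V]
  linarith

theorem NiceU.V_strictMono (hu : NiceU m uu) : StrictMono (V uu) :=
  strictMono_nat_of_lt_succ hu.V_lt

theorem NiceU.V_add (hu : NiceU m uu) (z : ℕ) : V uu (z + m) = V uu z + 1 := by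
  induction z with
  | zero =>
      show V uu (0 + m) = V uu 0 + 1
      simp only [Nat.zero_add, V]
      rw [hu.sum1]
      norm_num
  | succ n ih =>
      have h1 : n + 1 + m = (n + m) + 1 := by omega
      rw [h1]
      show V uu (n + m) + uu (n + m) = V uu n + uu n + 1
      rw [ih, hu.per n]
      ring

variable (F : ℝ → ℝ) (uu : ℕ → ℝ)

/-- the minimal arc for mass `uu z` at base level `y` is long -/
def Bad (z : ℕ) (y : ℝ) : Prop := π ≤ qlo F (y + V uu (z+1)) - qhi F (y + V uu z)
def Bhi (z : ℕ) (y : ℝ) : Prop := π ≤ qhi F (y + V uu (z+1)) - qhi F (y + V uu z)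
def Blo (z : ℕ) (y : ℝ) : Prop := π ≤ qlo F (y + V uu (z+1)) - qlo F (y + V uu z)

variable {F uu}

theorem Bad.bhi (hF : NiceF F) {z y} (h : Bad F uu z y) : Bhi F uu z y :=
  le_trans h (by have := hF.qlo_le_qhi (y + V uu (z+1)); unfold Bad at *; linarith)

theorem Bad.blo (hF : NiceF F) {z y} (h : Bad F uu z y) : Blo F uu z y :=
  le_trans h (by have := hF.qlo_le_qhi (y + V uu z); unfold Bad at *; linarith)

theorem exists_third (hm : 3 ≤ m) (z w : ℕ) (hz : z < m) (hw : w < m) :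
    ∃ v < m, v ≠ z ∧ v ≠ w := by
  rcases eq_or_ne z 0 with h0 | h0
  · rcases eq_or_ne w 1 with h1 | h1
    · exact ⟨2, by omega, by omega, by omega⟩
    · exact ⟨1, by omega, by omega, by omega⟩
  · rcases eq_or_ne w 0 with h1 | h1
    · rcases eq_or_ne z 1 with h2 | h2
      · exact ⟨2, by omega, by omega, by omega⟩
      · exact ⟨1, by omega, by omega, by omega⟩
    · exact ⟨0, by omega, by omega, by omega⟩

/-- generic uniqueness: a positive family over `range m` summing to `2π` has
at most one element that is `≥ π`. -/
theorem unique_big (hm : 3 ≤ m) (f : ℕ → ℝ) (hpos : ∀ v < m, 0 < f v)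
    (hsum : ∑ v ∈ Finset.range m, f v = 2*π)
    {z w : ℕ} (hz : z < m) (hw : w < m) (hzw : z ≠ w)
    (h1 : π ≤ f z) (h2 : π ≤ f w) : False := by
  obtain ⟨v, hv, hvz, hvw⟩ := exists_third hm z w hz hw
  have hsub : ({z, w, v} : Finset ℕ) ⊆ Finset.range m := by
    intro x hx
    simp only [Finset.mem_insert, Finset.mem_singleton] at hx
    rcases hx with h | h | h <;> simp [h, Finset.mem_range, hz, hw, hv]
  have hsum3 : ∑ x ∈ ({z, w, v} : Finset ℕ), f x = f z + f w + f v := by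
    rw [Finset.sum_insert (by simp [hzw, hvz.symm]), Finset.sum_insert (by simp [hvw.symm]),
      Finset.sum_singleton]
    ring
  have hle : ∑ x ∈ ({z, w, v} : Finset ℕ), f x ≤ ∑ v ∈ Finset.range m, f v := by
    apply Finset.sum_le_sum_of_subset_of_nonneg hsub
    intro x hx _
    exact le_of_lt (hpos x (Finset.mem_range.mp hx))
  have hv3 := hpos v hv
  have hpi := Real.pi_pos
  rw [hsum3, hsum] at hle
  linarith

theorem telescope_qhi (hF : NiceF F) (hu : NiceU m uu) (y : ℝ) :
    ∑ v ∈ Finset.range m, (qhi F (y + V uu (v+1)) - qhi F (y + V uu v)) = 2*π := by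
  rw [Finset.sum_range_sub (fun v => qhi F (y + V uu v))]
  have hV : V uu m = V uu 0 + 1 := by have := hu.V_add 0; rwa [Nat.zero_add] at this
  rw [hV]
  have : y + (V uu 0 + 1) = (y + V uu 0) + 1 := by ring
  rw [this, hF.qhi_add_one]
  ring

theorem telescope_qlo (hF : NiceF F) (hu : NiceU m uu) (y : ℝ) :
    ∑ v ∈ Finset.range m, (qlo F (y + V uu (v+1)) - qlo F (y + V uu v)) = 2*π := by
  rw [Finset.sum_range_sub (fun v => qlo F (y + V uu v))]
  have hV : V uu m = V uu 0 + 1 := by have := hu.V_add 0; rwa [Nat.zero_add] at this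
  rw [hV]
  have : y + (V uu 0 + 1) = (y + V uu 0) + 1 := by ring
  rw [this, hF.qlo_add_one]
  ring

theorem Bhi_unique (hF : NiceF F) (hu : NiceU m uu) {y : ℝ} {z w : ℕ}
    (hz : z < m) (hw : w < m) (hzw : z ≠ w)
    (h1 : Bhi F uu z y) (h2 : Bhi F uu w y) : False := by
  refine unique_big hu.m3 _ ?_ (telescope_qhi hF hu y) hz hw hzw h1 h2
  intro v _
  have := hF.qhi_lt_qlo (show y + V uu v < y + V uu (v+1) by have := hu.V_lt v; linarith)
  have := hF.qlo_le_qhi (y + V uu (v+1))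
  linarith

theorem Blo_unique (hF : NiceF F) (hu : NiceU m uu) {y : ℝ} {z w : ℕ}
    (hz : z < m) (hw : w < m) (hzw : z ≠ w)
    (h1 : Blo F uu z y) (h2 : Blo F uu w y) : False := by
  refine unique_big hu.m3 _ ?_ (telescope_qlo hF hu y) hz hw hzw h1 h2
  intro v _
  have := hF.qhi_lt_qlo (show y + V uu v < y + V uu (v+1) by have := hu.V_lt v; linarith)
  have := hF.qlo_le_qhi (y + V uu v)
  linarith

theorem bhi_of_right (hF : NiceF F) {z : ℕ} {y₀ : ℝ}
    (h : ∀ ε > 0, ∃ y, y₀ ≤ y ∧ y < y₀ + ε ∧ Bad F uu z y) : Bhi F uu z y₀ := by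
  have key : qhi F (y₀ + V uu z) + π ≤ qhi F ((y₀ + V uu (z+1))) := by
    apply hF.qhi_rightcont
    intro ε hε
    obtain ⟨y, hy1, hy2, hy3⟩ := h ε hε
    unfold Bad at hy3
    have c1 : qhi F (y₀ + V uu z) ≤ qhi F (y + V uu z) := hF.qhi_mono (by linarith)
    have c2 : qlo F (y + V uu (z+1)) ≤ qhi F (y + V uu (z+1)) := hF.qlo_le_qhi _
    have c3 : qhi F (y + V uu (z+1)) ≤ qhi F (y₀ + V uu (z+1) + ε) := hF.qhi_mono (by linarith)
    linarith
  unfold Bhi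
  linarith

theorem blo_of_left (hF : NiceF F) {z : ℕ} {y₀ : ℝ}
    (h : ∀ ε > 0, ∃ y, y₀ - ε < y ∧ y ≤ y₀ ∧ Bad F uu z y) : Blo F uu z y₀ := by
  have key : qlo F (y₀ + V uu z) ≤ qlo F (y₀ + V uu (z+1)) - π := by
    apply hF.qlo_leftcont
    intro ε hε
    obtain ⟨y, hy1, hy2, hy3⟩ := h ε hε
    unfold Bad at hy3
    have c1 : qlo F (y₀ + V uu z - ε) ≤ qlo F (y + V uu z) := hF.qlo_mono (by linarith)
    have c2 : qlo F (y + V uu z) ≤ qhi F (y + V uu z) := hF.qlo_le_qhi _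
    have c3 : qlo F (y + V uu (z+1)) ≤ qlo F (y₀ + V uu (z+1)) := hF.qlo_mono (by linarith)
    linarith
  unfold Blo
  linarith

theorem closure_bad_sub (hF : NiceF F) (z : ℕ) :
    closure {y | Bad F uu z y} ⊆ {y₀ | Bhi F uu z y₀ ∨ Blo F uu z y₀} := by
  intro y₀ hy₀
  by_cases hR : ∀ ε > 0, ∃ y, y₀ ≤ y ∧ y < y₀ + ε ∧ Bad F uu z y
  · exact Or.inl (bhi_of_right hF hR)
  · push_neg at hR
    obtain ⟨ε₀, hε₀, hno⟩ := hR
    refine Or.inr (blo_of_left hF ?_)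
    intro ε hε
    obtain ⟨y, hy, hyd⟩ := Metric.mem_closure_iff.mp hy₀ (min ε ε₀) (lt_min hε hε₀)
    rw [Real.dist_eq] at hyd
    have h1 : |y₀ - y| < ε := lt_of_lt_of_le hyd (min_le_left _ _)
    have h2 : |y₀ - y| < ε₀ := lt_of_lt_of_le hyd (min_le_right _ _)
    rcases le_or_gt y₀ y with hc | hc
    · exfalso
      refine hno y hc ?_ hy
      rw [abs_sub_comm] at h2
      rw [abs_of_nonneg (by linarith)] at h2
      linarith
    · refine ⟨y, ?_, le_of_lt hc, hy⟩
      rw [abs_of_nonneg (by linarith)] at h1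
      linarith

theorem semicircle_bound (hF : NiceF F) (hu : NiceU m uu)
    (hAll : ∀ y : ℝ, ∃ z < m, Bad F uu z y) :
    ∃ Z < m, ∀ b : ℝ, F (b + π) - F b ≤ uu Z := by
  classical
  have hdisj : ∀ z w : ℕ, z < m → w < m → z ≠ w →
      ∀ y₀ : ℝ, y₀ ∈ closure {y | Bad F uu z y} → y₀ ∈ closure {y | Bad F uu w y} → False := by
    intro z w hz hw hzw y₀ h1 h2
    obtain ⟨v, hv, hbad⟩ := hAll y₀
    have hz' := closure_bad_sub hF z h1
    have hw' := closure_bad_sub hF w h2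
    have hez : z = v := by
      rcases hz' with h | h
      · by_contra hne; exact Bhi_unique hF hu hz hv hne h (hbad.bhi hF)
      · by_contra hne; exact Blo_unique hF hu hz hv hne h (hbad.blo hF)
    have hew : w = v := by
      rcases hw' with h | h
      · by_contra hne; exact Bhi_unique hF hu hw hv hne h (hbad.bhi hF)
      · by_contra hne; exact Blo_unique hF hu hw hv hne h (hbad.blo hF)
    exact hzw (hez.trans hew.symm)
  obtain ⟨z₀, hz₀, hbad₀⟩ := hAll 0
  set T := closure {y | Bad F uu z₀ y} with hT
  have hTne : (0:ℝ) ∈ T := subset_closure hbad₀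
  have hTc : IsClosed T := isClosed_closure
  have hcompl : Tᶜ = ⋃ w ∈ (Finset.range m).erase z₀, closure {y | Bad F uu w y} := by
    ext y
    simp only [Set.mem_compl_iff, Set.mem_iUnion, Finset.mem_erase, Finset.mem_range]
    constructor
    · intro hy
      obtain ⟨z, hz, hb⟩ := hAll y
      refine ⟨z, ⟨?_, hz⟩, subset_closure hb⟩
      rintro rfl
      exact hy (subset_closure hb)
    · rintro ⟨w, ⟨hwne, hwm⟩, hyw⟩ hyT
      exact hdisj z₀ w hz₀ hwm (Ne.symm hwne) y hyT hyw
  have hTo : IsOpen T := by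
    rw [← isClosed_compl_iff, hcompl]
    exact Set.Finite.isClosed_biUnion ((Finset.range m).erase z₀).finite_toSet
      (fun w _ => isClosed_closure)
  have hTuniv : T = Set.univ := IsClopen.eq_univ ⟨hTc, hTo⟩ ⟨0, hTne⟩
  have hBhi : ∀ y₀ : ℝ, Bhi F uu z₀ y₀ := by
    intro y₀
    apply bhi_of_right hF
    intro ε hε
    have hmem : y₀ + ε/2 ∈ T := by rw [hTuniv]; trivial
    obtain ⟨y, hy, hyd⟩ := Metric.mem_closure_iff.mp hmem (ε/2) (by linarith)
    rw [Real.dist_eq] at hyd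
    obtain ⟨hd1, hd2⟩ := abs_lt.mp hyd
    exact ⟨y, by linarith, by linarith, hy⟩
  refine ⟨z₀, hz₀, ?_⟩
  intro b
  have h1 := hBhi (F b - V uu z₀)
  unfold Bhi at h1
  have eV : V uu (z₀+1) = V uu z₀ + uu z₀ := rfl
  have e1 : F b - V uu z₀ + V uu z₀ = F b := by ring
  have e2 : F b - V uu z₀ + V uu (z₀+1) = F b + uu z₀ := by rw [eV]; ring
  rw [e1, e2] at h1
  have h2 : b ≤ qhi F (F b) := hF.le_qhi_self b
  have h3 : b + π ≤ qhi F (F b + uu z₀) := by linarith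
  have h4 : F (b + π) ≤ F (qhi F (F b + uu z₀)) := hF.mono h3
  rw [hF.F_qhi] at h4
  linarith

theorem finset_inf'_add_const (s : Finset ℕ) (hs : s.Nonempty) (f : ℕ → ℝ) (a : ℝ) :
    s.inf' hs (fun k => f k + a) = s.inf' hs f + a := by
  apply le_antisymm
  · obtain ⟨k, hk, hkeq⟩ := Finset.exists_mem_eq_inf' hs f
    calc s.inf' hs (fun k => f k + a) ≤ f k + a := Finset.inf'_le _ hk
    _ = s.inf' hs f + a := by rw [← hkeq]
  · apply Finset.le_inf'
    intro k hk
    have := Finset.inf'_le f hk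
    linarith

/-- The main abstract cut construction. -/
theorem cuts_exist (hF : NiceF F) (hu : NiceU m uu)
    (hdepth : ∀ z < m, ∃ a : ℝ, uu z < F (a + π) - F a) :
    ∃ c : ℕ → ℝ, c m = c 0 + 2*π ∧ ∀ z < m,
      (0 < c (z+1) - c z) ∧ (c (z+1) - c z < π) ∧ (F (c (z+1)) - F (c z) = uu z) := by
  classical
  have hm := hu.m3
  have hpi := Real.pi_pos
  by_cases hAll : ∀ y : ℝ, ∃ z < m, Bad F uu z y
  · exfalso
    obtain ⟨Z, hZ, hb⟩ := semicircle_bound hF hu hAll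
    obtain ⟨a, ha⟩ := hdepth Z hZ
    exact absurd (hb a) (not_le.mpr ha)
  push_neg at hAll
  obtain ⟨y, hy⟩ := hAll
  -- abbreviations
  set L : ℕ → ℝ := fun z => qlo F (y + V uu z) with hLdef
  set H : ℕ → ℝ := fun z => qhi F (y + V uu z) with hHdef
  have fHL : ∀ z, H z < L (z+1) := fun z =>
    hF.qhi_lt_qlo (by have := hu.V_lt z; linarith)
  have fLH : ∀ z, L z ≤ H z := fun z => hF.qlo_le_qhi _
  have fLper : ∀ z, L (z + m) = L z + 2*π := by
    intro z
    show qlo F (y + V uu (z+m)) = qlo F (y + V uu z) + 2*π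
    rw [hu.V_add z, show y + (V uu z + 1) = (y + V uu z) + 1 by ring, hF.qlo_add_one]
  have fHper : ∀ z, H (z + m) = H z + 2*π := by
    intro z
    show qhi F (y + V uu (z+m)) = qhi F (y + V uu z) + 2*π
    rw [hu.V_add z, show y + (V uu z + 1) = (y + V uu z) + 1 by ring, hF.qhi_add_one]
  have hFL : ∀ z, F (L z) = y + V uu z := fun z => hF.F_qlo _
  have hFH : ∀ z, F (H z) = y + V uu z := fun z => hF.F_qhi _
  -- gaps
  have gap_per : ∀ z, L (z + m + 1) - H (z + m) = L (z+1) - H z := by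
    intro z
    rw [show z + m + 1 = (z+1) + m by omega, fLper, fHper]
    ring
  have gap_lt : ∀ z, L (z+1) - H z < π := by
    intro z
    induction z using Nat.strong_induction_on with
    | _ z ih =>
      by_cases hzm : z < m
      · have := hy z hzm
        unfold Bad at this
        push_neg at this
        exact this
      · have hz' : z = (z - m) + m := by omega
        rw [hz', gap_per]
        exact ih (z - m) (by omega)
  have hne : (Finset.range m).Nonempty := ⟨0, Finset.mem_range.mpr (by omega)⟩
  set gmin : ℝ := (Finset.range m).inf' hne (fun z => L (z+1) - H z) with hgmin
  set smin : ℝ := (Finset.range m).inf' hne (fun z => π - (L (z+1) - H z)) with hsmin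
  have hgmin_pos : 0 < gmin := by
    rw [hgmin, Finset.lt_inf'_iff]
    intro z _
    have := fHL z
    linarith
  have hsmin_pos : 0 < smin := by
    rw [hsmin, Finset.lt_inf'_iff]
    intro z hz
    have := hy z (Finset.mem_range.mp hz)
    unfold Bad at this
    push_neg at this
    linarith
  set ε : ℝ := min (π/4) (min smin (gmin / m)) with hεdef
  have hε : 0 < ε := by
    apply lt_min (by linarith)
    apply lt_min hsmin_pos
    positivity
  have hε1 : ε ≤ π/4 := min_le_left _ _
  have hε2 : ε ≤ smin := le_trans (min_le_right _ _) (min_le_left _ _)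
  have hε3 : ε ≤ gmin / m := le_trans (min_le_right _ _) (min_le_right _ _)
  have gap_mod : ∀ z, L (z+1) - H z = L (z % m + 1) - H (z % m) := by
    intro z
    induction z using Nat.strong_induction_on with
    | _ z ih =>
      by_cases hzm : z < m
      · rw [Nat.mod_eq_of_lt hzm]
      · have hz' : z = (z - m) + m := by omega
        rw [hz', gap_per, ih (z - m) (by omega), Nat.add_mod_right]
  have gap_le : ∀ z, L (z+1) - H z ≤ π - ε := by
    intro z
    rw [gap_mod z]
    have h1 : smin ≤ π - (L (z % m + 1) - H (z % m)) := by
      rw [hsmin]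
      exact Finset.inf'_le _ (Finset.mem_range.mpr (Nat.mod_lt _ (by omega)))
    linarith
  have gap_ge : ∀ z, gmin ≤ L (z+1) - H z := by
    intro z
    rw [gap_mod z]
    rw [hgmin]
    exact Finset.inf'_le _ (Finset.mem_range.mpr (Nat.mod_lt _ (by omega)))
  -- chain growth of L
  have lo_chain : ∀ w n : ℕ, L w + n * gmin ≤ L (w + n) := by
    intro w n
    induction n with
    | zero => simp
    | succ n ih =>
        have h1 : gmin ≤ L (w + n + 1) - H (w + n) := gap_ge (w+n)
        have h2 : L (w+n) ≤ H (w+n) := fLH (w+n)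
        have : (↑(n+1) : ℝ) * gmin = n * gmin + gmin := by push_cast; ring
        rw [show w + (n+1) = (w + n) + 1 by omega, this]
        linarith
  -- the key feasibility claim
  have claimC : ∀ w k : ℕ, k ≤ m - 1 → L (w + k) ≤ H w + k * (π - ε) := by
    intro w k hk
    match k with
    | 0 => simpa using fLH w
    | 1 =>
        have := gap_le w
        simp only [Nat.cast_one, one_mul]
        linarith
    | (k+2) =>
        have hkm : k + 2 ≤ m - 1 := hk
        have h1 : L (w + (k+2)) + (↑(m - (k+2)) : ℝ) * gmin ≤ L (w + m) := by
          have := lo_chain (w + (k+2)) (m - (k+2))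
          rw [show w + (k+2) + (m - (k+2)) = w + m by omega] at this
          linarith
        have h2 : L (w + m) = L w + 2*π := fLper w
        have h3 : L w ≤ H w := fLH w
        -- arithmetic: k+2 ≤ m-1, ε ≤ gmin/m, so (k+2)ε ≤ gmin ≤ (m-(k+2))·gmin + k·π
        have hmk : (1:ℝ) ≤ (↑(m - (k+2)) : ℝ) := by
          have : 1 ≤ m - (k+2) := by omega
          exact_mod_cast this
        have hk2m : ((k:ℝ)+2) ≤ (m:ℝ) - 1 := by
          have h4 : (k+3 : ℕ) ≤ m := by omega
          have h5 : ((k:ℝ)+3) ≤ (m:ℝ) := by exact_mod_cast h4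
          linarith
        have hmpos : (0:ℝ) < m := by positivity
        have hεg : (m:ℝ) * ε ≤ gmin := by
          calc (m:ℝ) * ε ≤ (m:ℝ) * (gmin / m) := mul_le_mul_of_nonneg_left hε3 (le_of_lt hmpos)
          _ = gmin := by field_simp
        have harith : 2*π - (↑(m - (k+2)) : ℝ) * gmin ≤ (↑(k+2) : ℝ) * (π - ε) := by
          have hc : ((k:ℝ)+2) * ε ≤ gmin := by
            have h5 : ((k:ℝ)+2) * ε ≤ (m:ℝ) * ε := by
              apply mul_le_mul_of_nonneg_right _ (le_of_lt hε)
              linarith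
            linarith
          have h6 : gmin ≤ (↑(m - (k+2)) : ℝ) * gmin := by
            nlinarith [hgmin_pos]
          have h7 : (0:ℝ) ≤ (k:ℝ) * π := by positivity
          push_cast
          nlinarith
        push_cast at h1 harith ⊢
        linarith
  -- Bellman value function
  obtain ⟨d, hd⟩ : ∃ d : ℕ → ℝ, ∀ j, d j = (Finset.range m).inf' hne
      (fun k => H (j + (m - 1 - k)) + k * (π - ε)) := ⟨_, fun _ => rfl⟩
  have D0 : ∀ j, d j ≤ H (j + (m-1)) := by
    intro j
    rw [hd j]
    have h := Finset.inf'_le (fun k => H (j + (m - 1 - k)) + (k:ℝ) * (π - ε))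
      (Finset.mem_range.mpr (show 0 < m by omega))
    simp only [Nat.sub_zero, Nat.cast_zero, zero_mul, add_zero] at h
    exact h
  have D1 : ∀ j, L (j + (m-1)) ≤ d j := by
    intro j
    rw [hd j]
    apply Finset.le_inf'
    intro k hk
    have hkm : k ≤ m - 1 := by
      have := Finset.mem_range.mp hk
      omega
    have := claimC (j + (m - 1 - k)) k hkm
    rw [show j + (m - 1 - k) + k = j + (m-1) by omega] at this
    exact this
  have D2 : ∀ j, d (j+1) ≤ d j + (π - ε) := by
    intro j
    rw [hd j, hd (j+1)]
    rw [show ((Finset.range m).inf' hne (fun k => H (j + (m - 1 - k)) + k * (π - ε)) + (π - ε))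
      = (Finset.range m).inf' hne (fun k => (H (j + (m - 1 - k)) + k * (π - ε)) + (π - ε))
      from (finset_inf'_add_const _ hne _ _).symm]
    apply Finset.le_inf'
    intro k hk
    have hkm : k < m := Finset.mem_range.mp hk
    by_cases hklt : k < m - 1
    · have hmem : (k+1) ∈ Finset.range m := Finset.mem_range.mpr (by omega)
      have hle := Finset.inf'_le (fun k => H (j + 1 + (m - 1 - k)) + (k:ℝ) * (π - ε)) hmem
      rw [show j + 1 + (m - 1 - (k+1)) = j + (m - 1 - k) by omega] at hle
      push_cast at hle ⊢
      linarith
    · have hkeq : k = m - 1 := by omega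
      have hmem : (0:ℕ) ∈ Finset.range m := Finset.mem_range.mpr (by omega)
      have hle := Finset.inf'_le (fun k => H (j + 1 + (m - 1 - k)) + (k:ℝ) * (π - ε)) hmem
      simp only [Nat.sub_zero, Nat.cast_zero, zero_mul, add_zero] at hle
      rw [show j + 1 + (m - 1) = j + m by omega, fHper j] at hle
      have hm3 : (3:ℝ) ≤ (m:ℝ) := by exact_mod_cast hm
      have hbig : (2:ℝ)*π ≤ (m:ℝ) * (π - ε) := by nlinarith
      have hcast : ((m - 1 : ℕ) : ℝ) = (m:ℝ) - 1 := by
        rw [Nat.cast_sub (by omega)]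
        norm_num
      rw [hkeq, show j + (m - 1 - (m-1)) = j by omega, hcast]
      nlinarith
  have D3 : ∀ j, d j < d (j+1) := by
    intro j
    have h1 : L (j + 1 + (m-1)) ≤ d (j+1) := D1 (j+1)
    have h2 : d j ≤ H (j + (m-1)) := D0 j
    have h3 : H (j + (m-1)) < L (j + (m-1) + 1) := fHL _
    rw [show j + (m-1) + 1 = j + 1 + (m-1) by omega] at h3
    linarith
  have D4 : ∀ j, d (j + m) = d j + 2*π := by
    intro j
    rw [hd j, hd (j+m)]
    have hcongr : (Finset.range m).inf' hne (fun k => H (j + m + (m - 1 - k)) + k * (π - ε))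
        = (Finset.range m).inf' hne (fun k => (H (j + (m - 1 - k)) + k * (π - ε)) + 2*π) := by
      apply Finset.inf'_congr _ rfl
      intro k _
      rw [show j + m + (m - 1 - k) = (j + (m - 1 - k)) + m by omega, fHper]
      ring
    rw [hcongr, finset_inf'_add_const]
  -- define the cuts
  set c : ℕ → ℝ := fun z => d (z+1) - 2*π with hcdef
  have hcz : ∀ z, c z = d (z+1) - 2*π := fun z => rfl
  have hcL : ∀ z, L z ≤ c z := by
    intro z
    have h1 := D1 (z+1)
    rw [show z + 1 + (m-1) = z + m by omega, fLper] at h1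
    rw [hcz]
    linarith
  have hcH : ∀ z, c z ≤ H z := by
    intro z
    have h1 := D0 (z+1)
    rw [show z + 1 + (m-1) = z + m by omega, fHper] at h1
    rw [hcz]
    linarith
  have hFc : ∀ z, F (c z) = y + V uu z := by
    intro z
    have h1 : F (L z) ≤ F (c z) := hF.mono (hcL z)
    have h2 : F (c z) ≤ F (H z) := hF.mono (hcH z)
    rw [hFL] at h1
    rw [hFH] at h2
    linarith
  refine ⟨c, ?_, ?_⟩
  · rw [hcz, hcz, show m + 1 = 1 + m by omega, D4 1]
    ring
  · intro z hz
    have hgap1 : c (z+1) - c z = d (z+2) - d (z+1) := by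
      rw [hcz, hcz, show z + 1 + 1 = z + 2 by omega]
      ring
    have h1 := D3 (z+1)
    have h2 := D2 (z+1)
    rw [show z + 1 + 1 = z + 2 by omega] at h1 h2
    refine ⟨by rw [hgap1]; linarith, by rw [hgap1]; linarith, ?_⟩
    rw [hFc, hFc]
    show y + (V uu z + uu z) - (y + V uu z) = uu z
    ring

end Cuts

/-! ### trig classification -/

theorem sin_pos_loc {x : ℝ} (hl : -(2*π) < x) (hr : x < 2*π) (h : 0 < Real.sin x) :
    (0 < x ∧ x < π) ∨ (x < -π) := by
  have hpi := Real.pi_pos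
  rcases le_or_gt x (-π) with h1 | h1
  · rcases eq_or_lt_of_le h1 with he | hlt
    · exfalso
      rw [he] at h
      simp [Real.sin_neg, Real.sin_pi] at h
    · exact Or.inr hlt
  · rcases le_or_gt x 0 with h2 | h2
    · exfalso
      rcases eq_or_lt_of_le h2 with he | hlt
      · rw [he] at h; simp at h
      · have := Real.sin_neg_of_neg_of_neg_pi_lt hlt h1
        linarith
    · rcases lt_or_ge x π with h3 | h3
      · exact Or.inl ⟨h2, h3⟩
      · exfalso
        have h4 : Real.sin (x - 2*π) ≤ 0 := by
          have h5 : 0 ≤ Real.sin (-(x - 2*π)) := by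
            apply Real.sin_nonneg_of_nonneg_of_le_pi <;> linarith
          rw [Real.sin_neg] at h5
          linarith
        rw [Real.sin_sub_two_pi] at h4
        linarith

theorem sin_neg_loc {x : ℝ} (hl : -(2*π) < x) (hr : x < 2*π) (h : Real.sin x < 0) :
    (-π < x ∧ x < 0) ∨ (π < x) := by
  have := sin_pos_loc (x := -x) (by linarith) (by linarith) (by rw [Real.sin_neg]; linarith)
  rcases this with ⟨ha, hb⟩ | hc
  · exact Or.inl ⟨by linarith, by linarith⟩
  · exact Or.inr (by linarith)

theorem sin_nonneg_loc {x : ℝ} (hl : -(2*π) < x) (hr : x < 2*π) (h : 0 ≤ Real.sin x) :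
    (0 ≤ x ∧ x ≤ π) ∨ (x ≤ -π) := by
  rcases eq_or_lt_of_le h with he | hlt
  · -- sin x = 0 : x ∈ {-π, 0, π} within window... derive by contradiction
    by_contra hc
    push_neg at hc
    obtain ⟨h1, h2⟩ := hc
    have hx : (x < 0 ∨ π < x) ∧ -π < x := by
      constructor
      · by_cases h0 : 0 ≤ x
        · right
          rcases h1 h0 with h3
          exact h3
        · left; linarith
      · exact h2
    rcases hx.1 with h3 | h3
    · have := Real.sin_neg_of_neg_of_neg_pi_lt h3 hx.2
      linarith [he]
    · have h4 : Real.sin (x - 2*π) < 0 := by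
        have h5 : 0 < Real.sin (-(x - 2*π)) :=
          Real.sin_pos_of_pos_of_lt_pi (by linarith) (by linarith)
        rw [Real.sin_neg] at h5
        linarith
      rw [Real.sin_sub_two_pi] at h4
      linarith [he]
  · rcases sin_pos_loc hl hr hlt with ⟨h1, h2⟩ | h1
    · exact Or.inl ⟨le_of_lt h1, le_of_lt h2⟩
    · exact Or.inr (le_of_lt h1)

theorem sin_nonpos_loc {x : ℝ} (hl : -(2*π) < x) (hr : x < 2*π) (h : Real.sin x ≤ 0) :
    (-π ≤ x ∧ x ≤ 0) ∨ (π ≤ x) := by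
  have := sin_nonneg_loc (x := -x) (by linarith) (by linarith) (by rw [Real.sin_neg]; linarith)
  rcases this with ⟨ha, hb⟩ | hc
  · exact Or.inl ⟨by linarith, by linarith⟩
  · exact Or.inr (by linarith)

/-- cos is below `cos w` outside the `w`-neighbourhood (circularly). -/
theorem cos_le_cos_of_dist {x w : ℝ} (hw0 : 0 < w) (hwpi : w ≤ π)
    (h1 : w ≤ |x|) (h2 : |x| ≤ 2*π - w) : Real.cos x ≤ Real.cos w := by
  have hpi := Real.pi_pos
  rw [← Real.cos_abs x]
  rcases le_or_gt |x| π with h3 | h3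
  · exact Real.cos_le_cos_of_nonneg_of_le_pi (le_of_lt hw0) h3 h1
  · have h4 : Real.cos |x| = Real.cos (2*π - |x|) := by
      rw [Real.cos_two_pi_sub]
    rw [h4]
    apply Real.cos_le_cos_of_nonneg_of_le_pi (le_of_lt hw0) (by linarith)
    linarith

/-! ### plane vectors and angles -/

abbrev E2 := EuclideanSpace ℝ (Fin 2)

noncomputable def eVec (t : ℝ) : E2 := (WithLp.equiv 2 (Fin 2 → ℝ)).symm ![Real.cos t, Real.sin t]

@[simp] theorem eVec_zero (t : ℝ) : eVec t 0 = Real.cos t := rfl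
@[simp] theorem eVec_one (t : ℝ) : eVec t 1 = Real.sin t := rfl

theorem inner_coord (θ v : E2) : ⟪θ, v⟫ = θ 0 * v 0 + θ 1 * v 1 := by
  rw [PiLp.inner_apply, Fin.sum_univ_two]
  simp [RCLike.inner_apply]
  ring

theorem inner_eVec_coord (θ : E2) (t : ℝ) :
    ⟪θ, eVec t⟫ = θ 0 * Real.cos t + θ 1 * Real.sin t := by
  rw [inner_coord]; simp

def zC (θ : E2) : ℂ := ⟨θ 0, θ 1⟩

@[simp] theorem zC_re (θ : E2) : (zC θ).re = θ 0 := rfl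
@[simp] theorem zC_im (θ : E2) : (zC θ).im = θ 1 := rfl

theorem zC_ne_zero {θ : E2} (h : θ ≠ 0) : zC θ ≠ 0 := by
  intro hz
  apply h
  have h0 : θ 0 = 0 := by rw [← zC_re θ, hz]; rfl
  have h1 : θ 1 = 0 := by rw [← zC_im θ, hz]; rfl
  ext i
  fin_cases i <;> simpa

theorem norm_eq_abs (θ : E2) : ‖θ‖ = ‖zC θ‖ := by
  rw [EuclideanSpace.norm_eq, Complex.norm_def, Complex.normSq_apply, Fin.sum_univ_two]
  simp [Real.norm_eq_abs, sq_abs]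
  ring_nf

noncomputable def ang (θ : E2) : ℝ :=
  if 0 ≤ (zC θ).arg then (zC θ).arg else (zC θ).arg + 2*π

theorem ang_nonneg (θ : E2) : 0 ≤ ang θ := by
  unfold ang
  split_ifs with h
  · exact h
  · have := Complex.neg_pi_lt_arg (zC θ)
    have hpi := Real.pi_pos
    linarith

theorem ang_lt_two_pi (θ : E2) : ang θ < 2*π := by
  unfold ang
  have h1 := Complex.arg_le_pi (zC θ)
  have hpi := Real.pi_pos
  split_ifs with h <;> linarith

theorem cos_ang (θ : E2) : Real.cos (ang θ) = Real.cos ((zC θ).arg) := by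
  unfold ang
  split_ifs with h
  · rfl
  · exact Real.cos_add_two_pi _

theorem sin_ang (θ : E2) : Real.sin (ang θ) = Real.sin ((zC θ).arg) := by
  unfold ang
  split_ifs with h
  · rfl
  · exact Real.sin_add_two_pi _

theorem coord0 {θ : E2} (h : θ ≠ 0) : θ 0 = ‖θ‖ * Real.cos (ang θ) := by
  rw [cos_ang, norm_eq_abs, Complex.cos_arg (zC_ne_zero h), zC_re]
  have : ‖zC θ‖ ≠ 0 := by
    simpa using zC_ne_zero h
  field_simp

theorem coord1 {θ : E2} (h : θ ≠ 0) : θ 1 = ‖θ‖ * Real.sin (ang θ) := by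
  rw [sin_ang, norm_eq_abs, Complex.sin_arg _, zC_im]
  have : ‖zC θ‖ ≠ 0 := by
    simpa using zC_ne_zero h
  field_simp

theorem inner_eVec (θ : E2) (t : ℝ) : ⟪θ, eVec t⟫ = ‖θ‖ * Real.cos (ang θ - t) := by
  by_cases h : θ = 0
  · subst h
    simp [inner_eVec_coord]
  · rw [inner_eVec_coord, coord0 h, coord1 h, Real.cos_sub]
    ring

theorem continuous_zC : Continuous zC := by
  have h0 : Continuous (fun θ : E2 => θ 0) := by
    exact (EuclideanSpace.proj (0 : Fin 2) : E2 →L[ℝ] ℝ).continuous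
  have h1 : Continuous (fun θ : E2 => θ 1) := by
    exact (EuclideanSpace.proj (1 : Fin 2) : E2 →L[ℝ] ℝ).continuous
  have : Continuous (fun θ : E2 => ((θ 0 : ℂ) + (θ 1 : ℂ) * Complex.I)) := by
    exact ((Complex.continuous_ofReal.comp h0).add
      ((Complex.continuous_ofReal.comp h1).mul continuous_const))
  convert this using 2 with θ
  apply Complex.ext <;> simp [zC]

theorem measurable_ang : Measurable ang := by
  have harg : Measurable (fun θ : E2 => (zC θ).arg) :=
    Complex.measurable_arg.comp continuous_zC.measurable
  unfold ang
  exact Measurable.ite (measurableSet_le measurable_const harg) harg (harg.add_const _)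

/-! ### null sets -/

variable {μ : Measure E2} [IsProbabilityMeasure μ]

theorem ray_null (hac : μ ≪ volume) (t : ℝ) : μ {θ : E2 | ⟪θ, eVec t⟫ = 0} = 0 := by
  have hset : {θ : E2 | ⟪θ, eVec t⟫ = 0}
      = ((LinearMap.ker (innerSL ℝ (eVec t) : E2 →ₗ[ℝ] ℝ) : Submodule ℝ E2) : Set E2) := by
    ext θ
    simp only [mem_setOf_eq, SetLike.mem_coe, LinearMap.mem_ker]
    constructor
    · intro h
      simp only [ContinuousLinearMap.coe_coe, innerSL_apply_apply]
      rw [real_inner_comm]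
      exact h
    · intro h
      simp only [ContinuousLinearMap.coe_coe, innerSL_apply_apply] at h
      rw [real_inner_comm] at h
      exact h
  have hne : LinearMap.ker (innerSL ℝ (eVec t) : E2 →ₗ[ℝ] ℝ) ≠ (⊤ : Submodule ℝ E2) := by
    intro htop
    have hmem : eVec t ∈ LinearMap.ker (innerSL ℝ (eVec t) : E2 →ₗ[ℝ] ℝ) := by
      rw [htop]; trivial
    rw [LinearMap.mem_ker] at hmem
    simp only [ContinuousLinearMap.coe_coe, innerSL_apply_apply] at hmem
    rw [inner_eVec_coord] at hmem
    simp at hmem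
    nlinarith [Real.sin_sq_add_cos_sq t, hmem]
  have hvol : volume ((LinearMap.ker (innerSL ℝ (eVec t) : E2 →ₗ[ℝ] ℝ) : Submodule ℝ E2) : Set E2) = 0 :=
    Measure.addHaar_submodule volume _ hne
  rw [hset]
  exact hac hvol

theorem level_null (hac : μ ≪ volume) (x : ℝ) : μ {θ : E2 | ang θ = x} = 0 := by
  apply measure_mono_null _ (ray_null hac (x + π/2))
  intro θ hθ
  simp only [mem_setOf_eq] at hθ ⊢
  rw [inner_eVec, hθ]
  have : x - (x + π/2) = -(π/2) := by ring
  rw [this, Real.cos_neg, Real.cos_pi_div_two, mul_zero]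

/-! ### the circular CDF -/

noncomputable def gg (μ : Measure E2) (s : ℝ) : ℝ := (μ {θ | ang θ < s}).toReal

theorem meas_ang_lt (s : ℝ) : MeasurableSet {θ : E2 | ang θ < s} :=
  measurableSet_lt measurable_ang measurable_const

theorem meas_ang_band (a b : ℝ) : MeasurableSet {θ : E2 | a ≤ ang θ ∧ ang θ < b} :=
  (measurableSet_le measurable_const measurable_ang).inter (meas_ang_lt b)

theorem gg_mono : Monotone (gg μ) := by
  intro s t hst
  apply ENNReal.toReal_mono (measure_ne_top μ _)
  exact measure_mono (fun θ h => lt_of_lt_of_le h hst)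

theorem gg_nonneg (s : ℝ) : 0 ≤ gg μ s := ENNReal.toReal_nonneg

theorem gg_le_one (s : ℝ) : gg μ s ≤ 1 := by
  unfold gg
  rw [← ENNReal.toReal_one]
  apply ENNReal.toReal_mono ENNReal.one_ne_top
  rw [← measure_univ (μ := μ)]
  exact measure_mono (subset_univ _)

theorem gg_of_nonpos {s : ℝ} (hs : s ≤ 0) : gg μ s = 0 := by
  unfold gg
  have : {θ : E2 | ang θ < s} = ∅ := by
    ext θ
    simp only [mem_setOf_eq, mem_empty_iff_false, iff_false, not_lt]
    linarith [ang_nonneg θ]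
  rw [this]
  simp

theorem gg_of_ge {s : ℝ} (hs : 2*π ≤ s) : gg μ s = 1 := by
  unfold gg
  have : {θ : E2 | ang θ < s} = univ := by
    ext θ
    simp only [mem_setOf_eq, mem_univ, iff_true]
    linarith [ang_lt_two_pi θ]
  rw [this]
  simp

theorem gg_diff {a b : ℝ} (hab : a ≤ b) :
    gg μ b - gg μ a = (μ {θ | a ≤ ang θ ∧ ang θ < b}).toReal := by
  have hsplit : {θ : E2 | ang θ < b} = {θ | ang θ < a} ∪ {θ | a ≤ ang θ ∧ ang θ < b} := by
    ext θ
    simp only [mem_setOf_eq, mem_union]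
    constructor
    · intro h
      rcases lt_or_ge (ang θ) a with h' | h'
      · exact Or.inl h'
      · exact Or.inr ⟨h', h⟩
    · rintro (h | ⟨h1, h2⟩)
      · linarith
      · exact h2
  have hdisj : Disjoint {θ : E2 | ang θ < a} {θ | a ≤ ang θ ∧ ang θ < b} := by
    rw [Set.disjoint_iff]
    rintro θ ⟨h1, h2, h3⟩
    exact absurd h2 (not_le.mpr h1)
  have hmu := measure_union (μ := μ) hdisj (meas_ang_band a b)
  rw [← hsplit] at hmu
  unfold gg
  rw [hmu, ENNReal.toReal_add (measure_ne_top μ _) (measure_ne_top μ _)]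
  ring

theorem gg_continuous (hac : μ ≪ volume) : Continuous (gg μ) := by
  rw [continuous_iff_continuousAt]
  intro a
  rw [Metric.continuousAt_iff]
  intro ε hε
  -- shrinking bands around the level set
  set S : ℕ → Set E2 := fun n => {θ | a - 1/(n+1) ≤ ang θ ∧ ang θ < a + 1/(n+1)} with hS
  have hSm : ∀ n, MeasurableSet (S n) := fun n => meas_ang_band _ _
  have hSanti : Antitone S := by
    intro n m hnm θ hθ
    obtain ⟨h1, h2⟩ := hθ
    have hle : 1/((m:ℝ)+1) ≤ 1/((n:ℝ)+1) := by
      apply one_div_le_one_div_of_le (by positivity)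
      exact_mod_cast Nat.succ_le_succ hnm
    exact ⟨by linarith, by linarith⟩
  have hIcap : ⋂ n, S n ⊆ {θ : E2 | ang θ = a} := by
    intro θ hθ
    simp only [mem_iInter, hS, mem_setOf_eq] at hθ
    simp only [mem_setOf_eq]
    by_contra hne
    rcases lt_or_gt_of_ne hne with h | h
    · obtain ⟨n, hn⟩ := exists_nat_one_div_lt (show 0 < a - ang θ by linarith)
      have := (hθ n).1
      linarith
    · obtain ⟨n, hn⟩ := exists_nat_one_div_lt (show 0 < ang θ - a by linarith)
      have := (hθ n).2
      linarith
  have htend : Filter.Tendsto (fun n => μ (S n)) Filter.atTop (nhds (μ (⋂ n, S n))) := by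
    apply MeasureTheory.tendsto_measure_iInter_atTop (fun n => (hSm n).nullMeasurableSet) hSanti
    exact ⟨0, measure_ne_top μ _⟩
  have hzero : μ (⋂ n, S n) = 0 :=
    measure_mono_null hIcap (level_null hac a)
  rw [hzero] at htend
  have hev : ∀ᶠ n in Filter.atTop, μ (S n) < ENNReal.ofReal ε := by
    apply htend.eventually_lt_const
    simp [ENNReal.ofReal_pos, hε]
  obtain ⟨n₀, hn₀⟩ := hev.exists
  refine ⟨1/(n₀+1), by positivity, ?_⟩
  intro s hs
  rw [Real.dist_eq] at hs ⊢
  have hbound : ∀ x y : ℝ, x ≤ y → |y - x| < 1/(n₀+1) →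
      {θ : E2 | x ≤ ang θ ∧ ang θ < y} ⊆ S n₀ →
      |gg μ y - gg μ x| < ε := by
    intro x y hxy hd hsub
    rw [abs_of_nonneg (by linarith [gg_mono (μ := μ) hxy])]
    rw [gg_diff hxy]
    have h1 : μ {θ : E2 | x ≤ ang θ ∧ ang θ < y} < ENNReal.ofReal ε :=
      lt_of_le_of_lt (measure_mono hsub) hn₀
    exact ENNReal.toReal_lt_of_lt_ofReal h1
  rcases le_or_gt a s with hcase | hcase
  · have hd : |s - a| < 1/((n₀:ℝ)+1) := hs
    have h2 : {θ : E2 | a ≤ ang θ ∧ ang θ < s} ⊆ S n₀ := by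
      intro θ hθ
      obtain ⟨h3, h4⟩ := hθ
      rw [abs_of_nonneg (by linarith)] at hd
      exact ⟨by linarith, by linarith⟩
    exact hbound a s hcase hd h2
  · have hd : |a - s| < 1/((n₀:ℝ)+1) := by rwa [abs_sub_comm] at hs
    have h2 : {θ : E2 | s ≤ ang θ ∧ ang θ < a} ⊆ S n₀ := by
      intro θ hθ
      obtain ⟨h3, h4⟩ := hθ
      rw [abs_of_nonneg (by linarith)] at hd
      exact ⟨by linarith, by linarith⟩
    have hfin := hbound s a (le_of_lt hcase) hd h2
    rwa [abs_sub_comm] at hfin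

noncomputable def FF (μ : Measure E2) (t : ℝ) : ℝ :=
  (⌊t / (2*π)⌋ : ℤ) + gg μ (t - 2*π * ⌊t / (2*π)⌋)

theorem floor_div_eq {t : ℝ} {K : ℤ} (h1 : 2*π*K ≤ t) (h2 : t < 2*π*(K+1)) :
    ⌊t / (2*π)⌋ = K := by
  have hpi := Real.two_pi_pos
  rw [Int.floor_eq_iff]
  constructor
  · rw [le_div_iff₀ hpi]
    push_cast
    linarith
  · rw [div_lt_iff₀ hpi]
    push_cast at h2 ⊢
    linarith

theorem FF_formula (μ : Measure E2) [IsProbabilityMeasure μ] {t : ℝ} (K : ℤ)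
    (h1 : 2*π*K ≤ t) (h2 : t ≤ 2*π*(K+1)) : FF μ t = K + gg μ (t - 2*π*K) := by
  have hpi := Real.two_pi_pos
  rcases lt_or_eq_of_le h2 with h3 | h3
  · unfold FF
    rw [floor_div_eq h1 h3]
  · have hK1 : ⌊t / (2*π)⌋ = K + 1 := by
      apply floor_div_eq
      · push_cast
        linarith
      · push_cast
        linarith
    unfold FF
    rw [hK1]
    have e1 : t - 2*π*(K+1 : ℤ) = 0 := by push_cast; linarith
    have e2 : t - 2*π*K = 2*π := by push_cast; linarith
    push_cast
    rw [show t - 2*π*((K:ℝ)+1) = 0 by push_cast at e1; linarith,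
        show t - 2*π*(K:ℝ) = 2*π by push_cast at e2; linarith]
    rw [gg_of_nonpos (le_refl 0), gg_of_ge (le_refl (2*π))]
    ring

theorem FF_nice (μ : Measure E2) [IsProbabilityMeasure μ] (hac : μ ≪ volume) :
    NiceF (FF μ) := by
  have hpi := Real.two_pi_pos
  have hbounds : ∀ t : ℝ, 2*π*(⌊t / (2*π)⌋ : ℤ) ≤ t ∧ t < 2*π*((⌊t / (2*π)⌋ : ℤ)+1) := by
    intro t
    constructor
    · have := Int.floor_le (t / (2*π))
      calc 2*π*(⌊t / (2*π)⌋ : ℤ) ≤ 2*π*(t/(2*π)) := by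
            apply mul_le_mul_of_nonneg_left this (le_of_lt hpi)
        _ = t := by field_simp
    · have := Int.lt_floor_add_one (t / (2*π))
      calc t = 2*π*(t/(2*π)) := by field_simp
        _ < 2*π*((⌊t / (2*π)⌋ : ℤ)+1) := by
            apply mul_lt_mul_of_pos_left _ hpi
            push_cast
            push_cast at this
            linarith
  constructor
  · -- monotone
    intro s t hst
    set Ks := ⌊s / (2*π)⌋ with hKs
    set Kt := ⌊t / (2*π)⌋ with hKt
    have hKle : Ks ≤ Kt := Int.floor_le_floor (by
      apply div_le_div_of_nonneg_right hst hpi.le)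
    unfold FF
    rw [← hKs, ← hKt]
    rcases eq_or_lt_of_le hKle with hKeq | hKlt
    · rw [← hKeq]
      have : gg μ (s - 2*π*Ks) ≤ gg μ (t - 2*π*Ks) := gg_mono (by linarith)
      linarith
    · have h1 : gg μ (s - 2*π*Ks) ≤ 1 := gg_le_one _
      have h2 : 0 ≤ gg μ (t - 2*π*Kt) := gg_nonneg _
      have h3 : (Ks : ℝ) + 1 ≤ (Kt : ℝ) := by exact_mod_cast hKlt
      linarith
  · -- continuous
    rw [continuous_iff_continuousAt]
    intro a
    set K := ⌊a / (2*π)⌋ with hK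
    obtain ⟨hb1, hb2⟩ := hbounds a
    rw [← hK] at hb1 hb2
    rcases eq_or_lt_of_le hb1 with heq | hlt
    · -- a is a multiple of 2π : glue left and right
      rw [continuousAt_iff_continuous_left_right]
      constructor
      · -- left: use formula with K - 1
        have hmodel : ContinuousAt (fun t => ((K:ℝ) - 1) + gg μ (t - 2*π*(K-1))) a := by
          apply ContinuousAt.add continuousAt_const
          exact ((gg_continuous hac).comp (continuous_sub_right _)).continuousAt
        apply ContinuousWithinAt.congr_of_eventuallyEq hmodel.continuousWithinAt
        · filter_upwards [Ioc_mem_nhdsLE_of_mem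
            (show a ∈ Ioc (2*π*((K:ℝ)-1)) a from ⟨by push_cast; nlinarith [Real.pi_pos], le_refl a⟩)]
          intro t ht
          obtain ⟨ht1, ht2⟩ := ht
          have := FF_formula μ (K-1) (by push_cast; push_cast at ht1; linarith)
            (by push_cast; linarith [heq])
          rw [this]
          push_cast
          ring_nf
        · have := FF_formula μ (K-1) (by push_cast; nlinarith [Real.pi_pos])
            (by push_cast; linarith [heq])
          rw [this]
          push_cast
          ring_nf
      · -- right: use formula with K
        have hmodel : ContinuousAt (fun t => ((K:ℝ)) + gg μ (t - 2*π*K)) a := by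
          apply ContinuousAt.add continuousAt_const
          exact ((gg_continuous hac).comp (continuous_sub_right _)).continuousAt
        apply ContinuousWithinAt.congr_of_eventuallyEq hmodel.continuousWithinAt
        · filter_upwards [Ico_mem_nhdsGE_of_mem
            (show a ∈ Ico a (2*π*((K:ℝ)+1)) from ⟨le_refl a, by push_cast at hb2 ⊢; linarith⟩)]
          intro t ht
          obtain ⟨ht1, ht2⟩ := ht
          exact FF_formula μ K (by linarith) (by push_cast at ht2 ⊢; linarith)
        · exact FF_formula μ K hb1 (le_of_lt hb2)
    · -- interior point
      have hmodel : ContinuousAt (fun t => ((K:ℝ)) + gg μ (t - 2*π*K)) a := by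
        apply ContinuousAt.add continuousAt_const
        exact ((gg_continuous hac).comp (continuous_sub_right _)).continuousAt
      apply ContinuousAt.congr hmodel
      filter_upwards [Ioo_mem_nhds hlt hb2]
      intro t ht
      exact (FF_formula μ K (le_of_lt ht.1) (le_of_lt ht.2)).symm
  · -- periodicity
    intro t
    have h1 : (t + 2*π) / (2*π) = t/(2*π) + 1 := by field_simp
    unfold FF
    rw [h1, Int.floor_add_one]
    push_cast
    have h2 : t + 2*π - 2*π*((⌊t / (2*π)⌋ : ℝ) + 1) = t - 2*π*(⌊t / (2*π)⌋ : ℝ) := by ring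
    rw [h2]
    ring


/-! ### sector membership, pointwise trig analysis -/

theorem caseIA {a b x : ℝ} (h1 : 0 < b - a) (h2 : b - a ≤ π) (hax : a < x) (hxb : x < b) :
    0 ≤ Real.sin (x - a) ∧ Real.sin (x - b) ≤ 0 := by
  constructor
  · exact Real.sin_nonneg_of_nonneg_of_le_pi (by linarith) (by linarith)
  · have h3 : 0 ≤ Real.sin (b - x) :=
      Real.sin_nonneg_of_nonneg_of_le_pi (by linarith) (by linarith)
    have h4 : x - b = -(b - x) := by ring
    rw [h4, Real.sin_neg]
    linarith

theorem caseIB {a b x : ℝ} (ha : 0 ≤ a) (ha2 : a < 2*π) (hb : b ≤ 2*π)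
    (h1 : 0 < b - a) (h2 : b - a ≤ π) (hx : 0 ≤ x) (hx2 : x < 2*π)
    (hA : 0 ≤ Real.sin (x - a)) (hB : Real.sin (x - b) ≤ 0)
    (hxa : x ≠ a) (hxb : x ≠ b) (hxb2 : x ≠ b - 2*π) : a < x ∧ x < b := by
  have hpi := Real.pi_pos
  rcases sin_nonneg_loc (x := x - a) (by linarith) (by linarith) hA with ⟨hc1, hc2⟩ | hc
  · -- x ∈ [a, a + π]
    have hax : a < x := lt_of_le_of_ne (by linarith) (Ne.symm hxa)
    refine ⟨hax, ?_⟩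
    rcases sin_nonpos_loc (x := x - b) (by linarith) (by linarith) hB with ⟨hd1, hd2⟩ | hd
    · exact lt_of_le_of_ne (by linarith) hxb
    · linarith
  · -- x ≤ a - π : impossible
    exfalso
    have harg0 : 0 ≤ x - b + 2*π := by linarith
    have harg1 : x - b + 2*π < π := by linarith
    have h5 : Real.sin (x - b) = Real.sin (x - b + 2*π) := (Real.sin_add_two_pi _).symm
    have h6 : 0 < x - b + 2*π := by
      rcases eq_or_lt_of_le harg0 with he | hlt
      · exfalso
        apply hxb2
        linarith
      · exact hlt
    have h7 : 0 < Real.sin (x - b + 2*π) := Real.sin_pos_of_pos_of_lt_pi h6 harg1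
    linarith [h5 ▸ h7]

theorem caseIIA1 {a b x : ℝ} (ha2 : a < 2*π) (h2 : b - a ≤ π) (hb : 2*π < b)
    (hax : a < x) (hx2 : x < 2*π) : 0 ≤ Real.sin (x - a) ∧ Real.sin (x - b) ≤ 0 := by
  have hpi := Real.pi_pos
  constructor
  · exact Real.sin_nonneg_of_nonneg_of_le_pi (by linarith) (by linarith)
  · have h3 : 0 ≤ Real.sin (b - x) :=
      Real.sin_nonneg_of_nonneg_of_le_pi (by linarith) (by linarith)
    have h4 : x - b = -(b - x) := by ring
    rw [h4, Real.sin_neg]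
    linarith

theorem caseIIA2 {a b x : ℝ} (ha : 0 ≤ a) (ha2 : a < 2*π)
    (h1 : 0 < b - a) (h2 : b - a ≤ π) (hb : 2*π < b) (hx : 0 ≤ x)
    (hxb : x < b - 2*π) : 0 ≤ Real.sin (x - a) ∧ Real.sin (x - b) ≤ 0 := by
  have hpi := Real.pi_pos
  constructor
  · have h3 : Real.sin (x - a) = Real.sin (x - a + 2*π) := (Real.sin_add_two_pi _).symm
    rw [h3]
    exact Real.sin_nonneg_of_nonneg_of_le_pi (by linarith) (by linarith)
  · have h4 : x - b = (x - (b - 2*π)) - 2*π := by ring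
    rw [h4, Real.sin_sub_two_pi]
    have h5 : 0 ≤ Real.sin ((b - 2*π) - x) :=
      Real.sin_nonneg_of_nonneg_of_le_pi (by linarith) (by linarith)
    have h6 : x - (b - 2*π) = -((b - 2*π) - x) := by ring
    rw [h6, Real.sin_neg]
    linarith

theorem caseIIB {a b x : ℝ} (ha : 0 ≤ a) (ha2 : a < 2*π)
    (h1 : 0 < b - a) (h2 : b - a ≤ π) (hb : 2*π < b) (hx : 0 ≤ x) (hx2 : x < 2*π)
    (hA : 0 ≤ Real.sin (x - a)) (hB : Real.sin (x - b) ≤ 0)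
    (hxa : x ≠ a) (hxb2 : x ≠ b - 2*π) : x < b - 2*π ∨ a < x := by
  have hpi := Real.pi_pos
  by_contra hcon
  push_neg at hcon
  obtain ⟨hge, hle⟩ := hcon
  -- b - 2π ≤ x ≤ a, with x ≠ b - 2π, x ≠ a
  have hgt : b - 2*π < x := lt_of_le_of_ne hge (Ne.symm hxb2)
  have hlt : x < a := lt_of_le_of_ne hle hxa
  rcases sin_nonneg_loc (x := x - a) (by linarith) (by linarith) hA with ⟨hc1, _⟩ | hc
  · linarith
  · -- x ≤ a - π
    have harg1 : 0 < x - (b - 2*π) := by linarith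
    have harg2 : x - (b - 2*π) < π := by linarith
    have h7 : 0 < Real.sin (x - (b - 2*π)) := Real.sin_pos_of_pos_of_lt_pi harg1 harg2
    have h4 : x - b = (x - (b - 2*π)) - 2*π := by ring
    rw [h4, Real.sin_sub_two_pi] at hB
    linarith


/-! ### sectors -/

noncomputable def Sec (a b : ℝ) : Set E2 :=
  {θ | 0 ≤ ⟪θ, eVec (a + π/2)⟫ ∧ ⟪θ, eVec (b + π/2)⟫ ≤ 0}

theorem inner_shift (θ : E2) (t : ℝ) : ⟪θ, eVec (t + π/2)⟫ = ‖θ‖ * Real.sin (ang θ - t) := by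
  rw [inner_eVec]
  congr 1
  have h : ang θ - (t + π/2) = -(π/2 - (ang θ - t)) := by ring
  rw [h, Real.cos_neg, Real.cos_pi_div_two_sub]

theorem mem_sec_iff {a b : ℝ} {θ : E2} (hθ : θ ≠ 0) :
    θ ∈ Sec a b ↔ 0 ≤ Real.sin (ang θ - a) ∧ Real.sin (ang θ - b) ≤ 0 := by
  have hn : 0 < ‖θ‖ := norm_pos_iff.mpr hθ
  unfold Sec
  rw [mem_setOf_eq, inner_shift, inner_shift]
  constructor
  · rintro ⟨h1, h2⟩
    exact ⟨nonneg_of_mul_nonneg_right h1 hn, nonpos_of_mul_nonpos_right h2 hn⟩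
  · rintro ⟨h1, h2⟩
    exact ⟨mul_nonneg (le_of_lt hn) h1, mul_nonpos_of_nonneg_of_nonpos (le_of_lt hn) h2⟩

theorem zero_mem_sec (a b : ℝ) : (0 : E2) ∈ Sec a b := by
  unfold Sec
  rw [mem_setOf_eq, inner_zero_left, inner_zero_left]
  exact ⟨le_refl 0, le_refl 0⟩

theorem eVec_int (t : ℝ) (k : ℤ) : eVec (t + k * (2*π)) = eVec t := by
  ext i
  fin_cases i
  · show Real.cos (t + k * (2*π)) = Real.cos t
    exact Real.cos_add_int_mul_two_pi t k
  · show Real.sin (t + k * (2*π)) = Real.sin t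
    exact Real.sin_add_int_mul_two_pi t k

theorem sec_shift (a b : ℝ) (k : ℤ) : Sec (a + k*(2*π)) (b + k*(2*π)) = Sec a b := by
  unfold Sec
  rw [show a + k*(2*π) + π/2 = (a + π/2) + k*(2*π) by ring,
      show b + k*(2*π) + π/2 = (b + π/2) + k*(2*π) by ring,
      eVec_int, eVec_int]

theorem cont_inner_right (v : E2) : Continuous (fun θ : E2 => ⟪θ, v⟫) := by
  have h : (fun θ : E2 => ⟪θ, v⟫) = fun θ : E2 => ⟪v, θ⟫ := by
    funext θ
    exact (real_inner_comm θ v).symm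
  rw [h]
  exact (innerSL ℝ v).continuous

theorem meas_sec (a b : ℝ) : MeasurableSet (Sec a b) :=
  (measurableSet_le measurable_const (cont_inner_right _).measurable).inter
    (measurableSet_le (cont_inner_right _).measurable measurable_const)

def levels (x : ℝ) : Set E2 := {θ | ang θ = x}

theorem ang_zero : ang (0 : E2) = 0 := by
  unfold ang zC
  have h : (⟨(0:E2) 0, (0:E2) 1⟩ : ℂ) = 0 := by
    apply Complex.ext <;> simp
  rw [h]
  simp [Complex.arg_zero]

/-- base case of the sector measure computation : `0 ≤ a < 2π`. -/
theorem sec_measure_base {μ : Measure E2} [IsProbabilityMeasure μ] (hac : μ ≪ volume)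
    {a b : ℝ} (hab : 0 < b - a) (hbpi : b - a ≤ π) (ha : 0 ≤ a) (ha2 : a < 2*π) :
    (μ (Sec a b)).toReal = FF μ b - FF μ a := by
  have hpi := Real.pi_pos
  have hFFa : FF μ a = gg μ a := by
    have h := FF_formula μ (t := a) 0 (by push_cast; linarith) (by push_cast; linarith)
    simpa using h
  rcases le_or_gt b (2*π) with hble | hbgt
  · -- Case I
    have hFFb : FF μ b = gg μ b := by
      have h := FF_formula μ (t := b) 0 (by push_cast; linarith) (by push_cast; linarith)
      simpa using h
    rw [hFFb, hFFa, gg_diff (show a ≤ b by linarith)]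
    congr 1
    set N : Set E2 := levels a ∪ levels b ∪ levels (b - 2*π) ∪ levels 0 with hN
    have hN0 : μ N = 0 := by
      rw [hN]
      repeat apply measure_union_null
      all_goals exact level_null hac _
    apply le_antisymm
    · have hsub : Sec a b ⊆ {θ : E2 | a ≤ ang θ ∧ ang θ < b} ∪ N := by
        intro θ hθ
        by_cases h0 : θ = 0
        · right
          rw [hN, h0]
          right
          show ang (0:E2) = 0
          exact ang_zero
        · by_cases hxa : ang θ = a
          · right; rw [hN]; left; left; left; exact hxa
          by_cases hxb : ang θ = b
          · right; rw [hN]; left; left; right; exact hxb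
          by_cases hxb2 : ang θ = b - 2*π
          · right; rw [hN]; left; right; exact hxb2
          left
          obtain ⟨hA, hB⟩ := (mem_sec_iff h0).mp hθ
          have := caseIB ha ha2 hble hab hbpi (ang_nonneg θ) (ang_lt_two_pi θ) hA hB hxa hxb hxb2
          exact ⟨le_of_lt this.1, this.2⟩
      calc μ (Sec a b) ≤ μ ({θ : E2 | a ≤ ang θ ∧ ang θ < b} ∪ N) := measure_mono hsub
        _ ≤ μ {θ : E2 | a ≤ ang θ ∧ ang θ < b} + μ N := measure_union_le _ _
        _ = μ {θ : E2 | a ≤ ang θ ∧ ang θ < b} := by rw [hN0, add_zero]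
    · have hsub : {θ : E2 | a ≤ ang θ ∧ ang θ < b} ⊆ Sec a b ∪ levels a := by
        rintro θ ⟨h1, h2⟩
        rcases eq_or_lt_of_le h1 with he | hlt
        · right; exact he.symm
        · left
          have h0 : θ ≠ 0 := by
            intro h0
            rw [h0, ang_zero] at hlt
            linarith
          rw [mem_sec_iff h0]
          exact caseIA hab hbpi hlt h2
      calc μ {θ : E2 | a ≤ ang θ ∧ ang θ < b} ≤ μ (Sec a b ∪ levels a) := measure_mono hsub
        _ ≤ μ (Sec a b) + μ (levels a) := measure_union_le _ _
        _ = μ (Sec a b) := by rw [show μ (levels a) = 0 from level_null hac a, add_zero]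
  · -- Case II : 2π < b
    have hFFb : FF μ b = 1 + gg μ (b - 2*π) := by
      have h := FF_formula μ (t := b) 1 (by push_cast; linarith) (by push_cast; linarith)
      rw [h]
      push_cast
      ring_nf
    set Su : Set E2 := {θ | ang θ < b - 2*π} ∪ {θ | a ≤ ang θ} with hSu
    have hmeas1 : MeasurableSet {θ : E2 | ang θ < b - 2*π} := meas_ang_lt _
    have hmeas2 : MeasurableSet {θ : E2 | a ≤ ang θ} :=
      measurableSet_le measurable_const measurable_ang
    have hdisj : Disjoint {θ : E2 | ang θ < b - 2*π} {θ : E2 | a ≤ ang θ} := by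
      rw [Set.disjoint_iff]
      rintro θ ⟨hl, hr⟩
      simp only [mem_setOf_eq] at hl hr
      linarith
    have hSuval : (μ Su).toReal = gg μ (b - 2*π) + (1 - gg μ a) := by
      rw [hSu, measure_union hdisj hmeas2,
        ENNReal.toReal_add (measure_ne_top μ _) (measure_ne_top μ _)]
      congr 1
      have hc : {θ : E2 | a ≤ ang θ} = {θ : E2 | ang θ < a}ᶜ := by
        ext θ
        simp [not_lt]
      rw [hc, prob_compl_eq_one_sub (meas_ang_lt a), ENNReal.toReal_sub_of_le
        (prob_le_one) ENNReal.one_ne_top]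
      simp [gg]
    have hgoal2 : FF μ b - FF μ a = (μ Su).toReal := by
      rw [hFFb, hFFa, hSuval]
      ring
    rw [hgoal2]
    congr 1
    set N : Set E2 := levels a ∪ levels (b - 2*π) ∪ levels 0 with hN
    have hN0 : μ N = 0 := by
      rw [hN]
      repeat apply measure_union_null
      all_goals exact level_null hac _
    apply le_antisymm
    · have hsub : Sec a b ⊆ Su ∪ N := by
        intro θ hθ
        by_cases h0 : θ = 0
        · right; rw [hN]; right; rw [h0]; exact ang_zero
        · by_cases hxa : ang θ = a
          · right; rw [hN]; left; left; exact hxa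
          by_cases hxb2 : ang θ = b - 2*π
          · right; rw [hN]; left; right; exact hxb2
          left
          obtain ⟨hA, hB⟩ := (mem_sec_iff h0).mp hθ
          rcases caseIIB ha ha2 hab hbpi hbgt (ang_nonneg θ) (ang_lt_two_pi θ) hA hB hxa hxb2
            with h | h
          · rw [hSu]; left; exact h
          · rw [hSu]; right; exact le_of_lt h
      calc μ (Sec a b) ≤ μ (Su ∪ N) := measure_mono hsub
        _ ≤ μ Su + μ N := measure_union_le _ _
        _ = μ Su := by rw [hN0, add_zero]
    · have hsub : Su ⊆ Sec a b ∪ levels a := by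
        intro θ hθ
        by_cases h0 : θ = 0
        · left; rw [h0]; exact zero_mem_sec a b
        rw [hSu] at hθ
        rcases hθ with h | h
        · left
          rw [mem_sec_iff h0]
          exact caseIIA2 ha ha2 hab hbpi hbgt (ang_nonneg θ) h
        · rcases eq_or_lt_of_le (show a ≤ ang θ from h) with he | hlt
          · right; exact he.symm
          · left
            rw [mem_sec_iff h0]
            exact caseIIA1 ha2 hbpi hbgt hlt (ang_lt_two_pi θ)
      calc μ Su ≤ μ (Sec a b ∪ levels a) := measure_mono hsub
        _ ≤ μ (Sec a b) + μ (levels a) := measure_union_le _ _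
        _ = μ (Sec a b) := by rw [show μ (levels a) = 0 from level_null hac a, add_zero]

theorem two_pi_floor_bounds (t : ℝ) :
    2*π*(⌊t / (2*π)⌋ : ℤ) ≤ t ∧ t < 2*π*((⌊t / (2*π)⌋ : ℤ)+1) := by
  have hpi := Real.two_pi_pos
  constructor
  · have := Int.floor_le (t / (2*π))
    calc 2*π*(⌊t / (2*π)⌋ : ℤ) ≤ 2*π*(t/(2*π)) := by
          apply mul_le_mul_of_nonneg_left this (le_of_lt hpi)
      _ = t := by field_simp
  · have := Int.lt_floor_add_one (t / (2*π))
    calc t = 2*π*(t/(2*π)) := by field_simp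
      _ < 2*π*((⌊t / (2*π)⌋ : ℤ)+1) := by
          apply mul_lt_mul_of_pos_left _ hpi
          push_cast
          push_cast at this
          linarith

theorem sec_measure {μ : Measure E2} [IsProbabilityMeasure μ] (hac : μ ≪ volume)
    {a b : ℝ} (hab : 0 < b - a) (hbpi : b - a ≤ π) :
    (μ (Sec a b)).toReal = FF μ b - FF μ a := by
  have hpi := Real.pi_pos
  set K := ⌊a / (2*π)⌋ with hK
  obtain ⟨hb1, hb2⟩ := two_pi_floor_bounds a
  rw [← hK] at hb1 hb2
  have hsec : Sec a b = Sec (a - K*(2*π)) (b - K*(2*π)) := by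
    have h := sec_shift a b (-K)
    rw [show a + ((-K : ℤ) : ℝ)*(2*π) = a - K*(2*π) by push_cast; ring,
        show b + ((-K : ℤ) : ℝ)*(2*π) = b - K*(2*π) by push_cast; ring] at h
    exact h.symm
  have hf := FF_nice μ hac
  have hFa : FF μ (a - K*(2*π)) = FF μ a - K := by
    have := hf.per_int (a - K*(2*π)) K
    rw [show a - K*(2*π) + K*(2*π) = a by ring] at this
    linarith
  have hFb : FF μ (b - K*(2*π)) = FF μ b - K := by
    have := hf.per_int (b - K*(2*π)) K
    rw [show b - K*(2*π) + K*(2*π) = b by ring] at this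
    linarith
  rw [hsec, sec_measure_base hac (by linarith) (by linarith)
    (by push_cast at hb1 ⊢; linarith) (by push_cast at hb2 ⊢; linarith), hFa, hFb]
  ring




/-! ### depth interface and geometric construction -/

theorem eVec_ne_zero (s : ℝ) : eVec s ≠ 0 := by
  intro h
  have h0 : Real.cos s = 0 := by
    have := congrArg (fun v : E2 => v 0) h
    simpa using this
  have h1 : Real.sin s = 0 := by
    have := congrArg (fun v : E2 => v 1) h
    simpa using this
  nlinarith [Real.sin_sq_add_cos_sq s]

theorem norm_eVec (s : ℝ) : ‖eVec s‖ = 1 := by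
  rw [EuclideanSpace.norm_eq, Fin.sum_univ_two]
  simp only [eVec_zero, eVec_one, Real.norm_eq_abs, sq_abs]
  rw [show Real.cos s ^ 2 + Real.sin s ^ 2 = 1 by
    have := Real.sin_sq_add_cos_sq s; linarith]
  exact Real.sqrt_one

theorem eVec_add_pi (s : ℝ) : eVec (s + π) = -eVec s := by
  ext i
  fin_cases i
  · show Real.cos (s + π) = -(eVec s 0)
    rw [Real.cos_add_pi]; rfl
  · show Real.sin (s + π) = -(eVec s 1)
    rw [Real.sin_add_pi]; rfl

theorem sec_halfplane (s : ℝ) : Sec (s - π/2) (s + π/2) = {θ : E2 | 0 ≤ ⟪θ, eVec s⟫} := by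
  unfold Sec
  ext θ
  simp only [mem_setOf_eq]
  rw [show s - π/2 + π/2 = s by ring, show s + π/2 + π/2 = s + π by ring,
    eVec_add_pi, inner_neg_right]
  constructor
  · rintro ⟨h1, _⟩; exact h1
  · intro h; exact ⟨h, by linarith⟩

theorem halfplane_val {μ : Measure E2} [IsProbabilityMeasure μ] (hac : μ ≪ volume) (s : ℝ) :
    (μ {θ : E2 | 0 ≤ ⟪θ, eVec s⟫}).toReal = FF μ (s + π/2) - FF μ (s - π/2) := by
  rw [← sec_halfplane]
  exact sec_measure hac (by linarith [Real.pi_pos]) (by linarith)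

theorem halfplane_eq {v : E2} (hv : v ≠ 0) :
    {θ : E2 | 0 ≤ ⟪θ, v⟫} = {θ : E2 | 0 ≤ ⟪θ, eVec (ang v)⟫} := by
  have hdecomp : ∀ θ : E2, ⟪θ, v⟫ = ‖v‖ * ⟪θ, eVec (ang v)⟫ := by
    intro θ
    rw [inner_coord, inner_eVec_coord, coord0 hv, coord1 hv]
    ring
  have hn : 0 < ‖v‖ := norm_pos_iff.mpr hv
  ext θ
  simp only [mem_setOf_eq]
  rw [hdecomp θ]
  constructor
  · intro h
    exact nonneg_of_mul_nonneg_right h hn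
  · intro h
    exact mul_nonneg (le_of_lt hn) h

theorem depth_set_nonempty (μ : Measure E2) :
    {r | ∃ v : E2, v ≠ 0 ∧ r = (μ {θ | 0 ≤ ⟪θ, v⟫}).toReal}.Nonempty :=
  ⟨(μ {θ | 0 ≤ ⟪θ, eVec 0⟫}).toReal, eVec 0, eVec_ne_zero 0, rfl⟩

theorem depth_lt_imp {μ : Measure E2} [IsProbabilityMeasure μ] (hac : μ ≪ volume) {r : ℝ}
    (h : depth μ < r) : ∃ a : ℝ, FF μ (a + π) - FF μ a < r := by
  obtain ⟨xx, hx, hxr⟩ := exists_lt_of_csInf_lt (depth_set_nonempty μ) h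
  obtain ⟨v, hv, rfl⟩ := hx
  refine ⟨ang v - π/2, ?_⟩
  rw [halfplane_eq hv] at hxr
  have hval := halfplane_val hac (ang v)
  rw [hval] at hxr
  rw [show ang v - π/2 + π = ang v + π/2 by ring]
  linarith

/-! ### cut positions -/

theorem c_mono {c : ℕ → ℝ} {m : ℕ} (hc : ∀ z < m, 0 < c (z+1) - c z) :
    ∀ i j, i ≤ j → j ≤ m → c i ≤ c j := by
  intro i j hij hjm
  induction j with
  | zero =>
      have : i = 0 := by omega
      rw [this]
  | succ n ih =>
      rcases Nat.lt_or_ge i (n+1) with h | h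
      · have h1 : c i ≤ c n := ih (by omega) (by omega)
        have h2 := hc n (by omega)
        linarith
      · have : i = n+1 := by omega
        rw [this]

theorem find_interval {c : ℕ → ℝ} {α : ℝ} :
    ∀ n : ℕ, c 0 ≤ α → α < c n → ∃ z < n, c z ≤ α ∧ α < c (z+1) := by
  intro n
  induction n with
  | zero => intro h1 h2; exfalso; linarith
  | succ n ih =>
      intro h1 h2
      rcases lt_or_ge α (c n) with h | h
      · obtain ⟨z, hz, hz1, hz2⟩ := ih h1 h
        exact ⟨z, by omega, hz1, hz2⟩
      · exact ⟨n, by omega, h, h2⟩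

end HSAux

open HSAux Real Set

/-- in dimension 2 with m ≥ 3, if u ∈ Δ^m is strictly positive and
max_z u_z < 1 − δ(μ), then there exist alternatives in X realizing the
predictive distribution u. -/
theorem exists_question_2d {m : ℕ} (hm : 3 ≤ m)
    (μ : Measure (EuclideanSpace ℝ (Fin 2))) [IsProbabilityMeasure μ]
    (hac : μ ≪ volume)
    (X : Set (EuclideanSpace ℝ (Fin 2))) (hX : (interior X).Nonempty)
    (u : Fin m → ℝ) (hu : u ∈ simplex m) (hupos : ∀ z, 0 < u z)
    (hmax : ∀ z, u z < 1 - depth μ) :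
    ∃ x : Fin m → EuclideanSpace ℝ (Fin 2), (∀ z, x z ∈ X) ∧
      ∀ z, (μ (cone x z)).toReal = u z := by
  classical
  have hpi := Real.pi_pos
  obtain ⟨hu0, husum⟩ := hu
  have hm0 : 0 < m := by omega
  -- the periodic mass sequence
  obtain ⟨uu, huu_def⟩ : ∃ f : ℕ → ℝ, ∀ z : ℕ, f z = u ⟨z % m, Nat.mod_lt z hm0⟩ :=
    ⟨_, fun _ => rfl⟩
  have huun : ∀ (z : ℕ) (hz : z < m), uu z = u ⟨z, hz⟩ := by
    intro z hz
    rw [huu_def]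
    congr 1
    exact Fin.ext (Nat.mod_eq_of_lt hz)
  have huu : ∀ z : Fin m, uu z.val = u z := by
    intro z
    rw [huun z.val z.isLt]
  have hVsum : ∀ n : ℕ, V uu n = ∑ i ∈ Finset.range n, uu i := by
    intro n
    induction n with
    | zero => rfl
    | succ n ih => rw [Finset.sum_range_succ, ← ih]; rfl
  have hnice_u : NiceU m uu := by
    refine ⟨hm, ?_, ?_, ?_⟩
    · intro z; rw [huu_def]; exact hupos _
    · intro z
      rw [huu_def, huu_def]
      congr 1
      exact Fin.ext (by simp [Nat.add_mod_right])
    · rw [hVsum m, ← Fin.sum_univ_eq_sum_range uu m]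
      rw [← husum]
      exact Finset.sum_congr rfl (fun z _ => huu z)
  have hF := FF_nice μ hac
  have hdepth : ∀ z < m, ∃ a : ℝ, uu z < FF μ (a + π) - FF μ a := by
    intro z hz
    have h1 : depth μ < 1 - uu z := by
      rw [huun z hz]
      linarith [hmax ⟨z, hz⟩]
    obtain ⟨a, ha⟩ := depth_lt_imp hac h1
    refine ⟨a + π, ?_⟩
    have h2 := hF.per a
    rw [show a + π + π = a + 2*π by ring]
    linarith
  obtain ⟨c, hcm, hcz⟩ := cuts_exist hF hnice_u hdepth
  -- interior ball
  obtain ⟨p, hp⟩ := hX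
  obtain ⟨R, hR0, hball⟩ := Metric.mem_nhds_iff.mp (mem_interior_iff_mem_nhds.mp hp)
  -- geometric data
  obtain ⟨wd, hwd_def⟩ : ∃ f : Fin m → ℝ, ∀ z, f z = (c (z.val+1) - c z.val)/2 :=
    ⟨_, fun _ => rfl⟩
  obtain ⟨md, hmd_def⟩ : ∃ f : Fin m → ℝ, ∀ z, f z = (c z.val + c (z.val+1))/2 :=
    ⟨_, fun _ => rfl⟩
  have hwd : ∀ z, 0 < wd z ∧ wd z < π/2 := by
    intro z
    have h := hcz z.val z.isLt
    rw [hwd_def]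
    constructor
    · linarith [h.1]
    · linarith [h.2.1]
  have hcospos : ∀ z, 0 < Real.cos (wd z) := by
    intro z
    exact Real.cos_pos_of_mem_Ioo ⟨by linarith [(hwd z).1], (hwd z).2⟩
  have hFinNe : (Finset.univ : Finset (Fin m)).Nonempty := ⟨⟨0, hm0⟩, Finset.mem_univ _⟩
  obtain ⟨cmin, hcmin_def⟩ : ∃ cm : ℝ, cm = Finset.univ.inf' hFinNe (fun z => Real.cos (wd z)) :=
    ⟨_, rfl⟩
  have hcmin_pos : 0 < cmin := by
    rw [hcmin_def, Finset.lt_inf'_iff]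
    intro z _
    exact hcospos z
  have hcmin_le : ∀ z, cmin ≤ Real.cos (wd z) := by
    intro z
    rw [hcmin_def]
    exact Finset.inf'_le _ (Finset.mem_univ z)
  obtain ⟨r, hr_def⟩ : ∃ r : ℝ, r = (R/2) * cmin := ⟨_, rfl⟩
  have hr0 : 0 < r := by rw [hr_def]; positivity
  obtain ⟨ρ, hρ_def⟩ : ∃ f : Fin m → ℝ, ∀ z, f z = r / Real.cos (wd z) := ⟨_, fun _ => rfl⟩
  have hρpos : ∀ z, 0 < ρ z := by
    intro z
    rw [hρ_def]
    exact div_pos hr0 (hcospos z)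
  have hρle : ∀ z, ρ z ≤ R/2 := by
    intro z
    rw [hρ_def, div_le_iff₀ (hcospos z), hr_def]
    apply mul_le_mul_of_nonneg_left (hcmin_le z)
    linarith
  obtain ⟨x, hx_def⟩ : ∃ f : Fin m → E2, ∀ z, f z = p + ρ z • eVec (md z) := ⟨_, fun _ => rfl⟩
  have hinner : ∀ (θ : E2) (z : Fin m),
      ⟪θ, x z⟫ = ⟪θ, p⟫ + ρ z * (‖θ‖ * Real.cos (ang θ - md z)) := by
    intro θ z
    rw [hx_def z, inner_add_right, real_inner_smul_right, inner_eVec]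
  -- monotonicity of cuts
  have hmono := c_mono (fun v hv => (hcz v hv).1)
  -- the key strict comparison
  have hKEY : ∀ (θ : E2) (k : ℤ) (z w : Fin m), θ ≠ 0 → w ≠ z →
      c z.val < ang θ + k*(2*π) → ang θ + k*(2*π) < c (z.val+1) →
      ⟪θ, x w⟫ < ⟪θ, x z⟫ := by
    intro θ k z w hθ hwz h1 h2
    obtain ⟨α, hα⟩ : ∃ α : ℝ, α = ang θ + k*(2*π) := ⟨_, rfl⟩
    rw [← hα] at h1 h2
    have hnorm : 0 < ‖θ‖ := norm_pos_iff.mpr hθ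
    have hcosrw : ∀ t : ℝ, Real.cos (ang θ - t) = Real.cos (α - t) := by
      intro t
      rw [show α - t = (ang θ - t) + k*(2*π) by rw [hα]; ring, Real.cos_add_int_mul_two_pi]
    have hz1m : z.val + 1 ≤ m := z.isLt
    have hw1m : w.val + 1 ≤ m := w.isLt
    have hc0z : c 0 ≤ c z.val := hmono 0 z.val (by omega) (by omega)
    have hzm : c (z.val+1) ≤ c m := hmono _ m hz1m (le_refl m)
    have hmdw1 : md w = c w.val + wd w := by rw [hmd_def, hwd_def]; ring
    have hmdw2 : md w = c (w.val+1) - wd w := by rw [hmd_def, hwd_def]; ring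
    have hmdz1 : md z = c z.val + wd z := by rw [hmd_def, hwd_def]; ring
    have hmdz2 : md z = c (z.val+1) - wd z := by rw [hmd_def, hwd_def]; ring
    have hwdw := hwd w
    have hwdz := hwd z
    have hcmval : c m = c 0 + 2*π := hcm
    have habs : wd w ≤ |α - md w| ∧ |α - md w| ≤ 2*π - wd w := by
      rcases Nat.lt_or_ge w.val z.val with hcase | hcase
      · have hle : c (w.val+1) ≤ c z.val := hmono _ _ (by omega) (by omega)
        have h3 : wd w ≤ α - md w := by rw [hmdw2]; linarith
        have h4 : 0 ≤ α - md w := by linarith [hwdw.1]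
        rw [abs_of_nonneg h4]
        refine ⟨h3, ?_⟩
        have h5 : α < c m := lt_of_lt_of_le h2 hzm
        rw [hcmval] at h5
        have h6 : c 0 ≤ c w.val := hmono 0 w.val (by omega) (by omega)
        rw [hmdw1]
        linarith
      · have hne : z.val < w.val := by
          rcases Nat.lt_or_ge z.val w.val with h | h
          · exact h
          · exfalso; exact hwz (Fin.ext (by omega))
        have hle : c (z.val+1) ≤ c w.val := hmono _ _ (by omega) (by omega)
        have h3 : wd w ≤ md w - α := by rw [hmdw1]; linarith
        have h4 : α - md w ≤ 0 := by linarith [hwdw.1]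
        rw [abs_of_nonpos h4]
        refine ⟨by linarith, ?_⟩
        have h5 : md w ≤ c m - wd w := by
          rw [hmdw2]
          have := hmono (w.val+1) m hw1m (le_refl m)
          linarith
        rw [hcmval] at h5
        linarith
    have hcosw : Real.cos (α - md w) ≤ Real.cos (wd w) :=
      cos_le_cos_of_dist hwdw.1 (by linarith [hwdw.2]) habs.1 habs.2
    have habsz : |α - md z| < wd z := by
      rw [abs_lt]
      constructor
      · rw [hmdz1]; linarith
      · rw [hmdz2]; linarith
    have hcosz : Real.cos (wd z) < Real.cos (α - md z) := by
      have h5 := Real.cos_lt_cos_of_nonneg_of_le_pi (abs_nonneg (α - md z))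
        (by linarith [hwdz.2]) habsz
      rw [Real.cos_abs] at h5
      exact h5
    have hρw : ρ w * Real.cos (α - md w) ≤ r := by
      have h6 : ρ w * Real.cos (α - md w) ≤ ρ w * Real.cos (wd w) :=
        mul_le_mul_of_nonneg_left hcosw (le_of_lt (hρpos w))
      have h7 : ρ w * Real.cos (wd w) = r := by
        rw [hρ_def]
        exact div_mul_cancel₀ r (ne_of_gt (hcospos w))
      linarith
    have hρz : r < ρ z * Real.cos (α - md z) := by
      have h7 : ρ z * Real.cos (wd z) = r := by
        rw [hρ_def]
        exact div_mul_cancel₀ r (ne_of_gt (hcospos z))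
      have h8 : ρ z * Real.cos (wd z) < ρ z * Real.cos (α - md z) :=
        mul_lt_mul_of_pos_left hcosz (hρpos z)
      linarith
    rw [hinner θ w, hinner θ z, hcosrw, hcosrw]
    have h9 : ρ w * Real.cos (α - md w) < ρ z * Real.cos (α - md z) := lt_of_le_of_lt hρw hρz
    nlinarith [mul_lt_mul_of_pos_left h9 hnorm]
  -- the open angular cells
  obtain ⟨W, hW_def⟩ : ∃ W : Fin m → Set E2, ∀ z, W z =
      {θ : E2 | θ ≠ 0 ∧ ∃ k : ℤ, c z.val < ang θ + k*(2*π) ∧ ang θ + k*(2*π) < c (z.val+1)} :=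
    ⟨_, fun _ => rfl⟩
  have hWcone : ∀ z, W z ⊆ cone x z := by
    intro z θ hθ
    rw [hW_def] at hθ
    obtain ⟨hθ0, k, hk1, hk2⟩ := hθ
    constructor
    · intro i hi
      exact le_of_lt (hKEY θ k z i hθ0 (ne_of_gt hi) hk1 hk2)
    · intro i hi
      exact hKEY θ k z i hθ0 (ne_of_lt hi) hk1 hk2
  have hdisjcone : ∀ (z w : Fin m), w ≠ z → ∀ θ ∈ W w, θ ∉ cone x z := by
    intro z w hwz θ hθ hcone
    rw [hW_def] at hθ
    obtain ⟨hθ0, k, hk1, hk2⟩ := hθ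
    have hlt : ⟪θ, x z⟫ < ⟪θ, x w⟫ := hKEY θ k w z hθ0 (Ne.symm hwz) hk1 hk2
    obtain ⟨hc1, hc2⟩ := hcone
    rcases lt_trichotomy z w with h | h | h
    · have := hc1 w h
      linarith
    · exact hwz h.symm
    · have := hc2 w h
      linarith
  obtain ⟨Rays, hRays_def⟩ : ∃ s : Set E2,
      s = ⋃ i : Fin (m+1), {θ : E2 | ⟪θ, eVec (c i.val + π/2)⟫ = 0} := ⟨_, rfl⟩
  have hRays0 : μ Rays = 0 := by
    rw [hRays_def]
    exact measure_iUnion_null (fun i => ray_null hac _)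
  have hcover : ∀ θ : E2, θ ∉ Rays → ∃ z : Fin m, θ ∈ W z := by
    intro θ hθR
    have hθ0 : θ ≠ 0 := by
      intro h
      apply hθR
      rw [hRays_def, Set.mem_iUnion]
      refine ⟨⟨0, by omega⟩, ?_⟩
      rw [h]
      show ⟪(0:E2), _⟫ = 0
      exact inner_zero_left _
    obtain ⟨hb1, hb2⟩ := two_pi_floor_bounds (ang θ - c 0)
    obtain ⟨K, hKdef⟩ : ∃ K : ℤ, K = ⌊(ang θ - c 0) / (2*π)⌋ := ⟨_, rfl⟩
    rw [← hKdef] at hb1 hb2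
    obtain ⟨α, hαdef⟩ : ∃ α : ℝ, α = ang θ - 2*π*K := ⟨_, rfl⟩
    have hα1 : c 0 ≤ α := by rw [hαdef]; linarith
    have hα2 : α < c m := by
      rw [hαdef, hcm]
      push_cast at hb2 ⊢
      linarith
    obtain ⟨z, hzm, hz1, hz2⟩ := find_interval m hα1 hα2
    have hzne : c z ≠ α := by
      intro he
      apply hθR
      rw [hRays_def, Set.mem_iUnion]
      refine ⟨⟨z, by omega⟩, ?_⟩
      show ⟪θ, eVec (c z + π/2)⟫ = 0
      rw [inner_shift]
      have hsin : Real.sin (ang θ - c z) = 0 := by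
        rw [show ang θ - c z = (α - c z) + K*(2*π) by rw [hαdef]; ring,
          Real.sin_add_int_mul_two_pi, ← he, sub_self, Real.sin_zero]
      rw [hsin, mul_zero]
    refine ⟨⟨z, hzm⟩, ?_⟩
    rw [hW_def]
    refine ⟨hθ0, -K, ?_, ?_⟩
    · push_cast
      show c z < ang θ + -(K:ℝ)*(2*π)
      have : ang θ + -(K:ℝ)*(2*π) = α := by rw [hαdef]; ring
      rw [this]
      exact lt_of_le_of_ne hz1 hzne
    · push_cast
      show ang θ + -(K:ℝ)*(2*π) < c (z+1)
      have : ang θ + -(K:ℝ)*(2*π) = α := by rw [hαdef]; ring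
      rw [this]
      exact hz2
  have hWsec : ∀ z : Fin m, W z ⊆ Sec (c z.val) (c (z.val+1)) := by
    intro z θ hθ
    rw [hW_def] at hθ
    obtain ⟨hθ0, k, hk1, hk2⟩ := hθ
    rw [mem_sec_iff hθ0]
    have hgap := hcz z.val z.isLt
    have hs1 : Real.sin (ang θ - c z.val) = Real.sin ((ang θ + k*(2*π)) - c z.val) := by
      rw [show (ang θ + k*(2*π)) - c z.val = (ang θ - c z.val) + k*(2*π) by ring,
        Real.sin_add_int_mul_two_pi]
    have hs2 : Real.sin (ang θ - c (z.val+1)) = Real.sin ((ang θ + k*(2*π)) - c (z.val+1)) := by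
      rw [show (ang θ + k*(2*π)) - c (z.val+1) = (ang θ - c (z.val+1)) + k*(2*π) by ring,
        Real.sin_add_int_mul_two_pi]
    constructor
    · rw [hs1]
      apply Real.sin_nonneg_of_nonneg_of_le_pi
      · linarith
      · linarith [hgap.2.1]
    · rw [hs2]
      rw [show (ang θ + k*(2*π)) - c (z.val+1) = -(c (z.val+1) - (ang θ + k*(2*π))) by ring,
        Real.sin_neg]
      have h5 : 0 ≤ Real.sin (c (z.val+1) - (ang θ + k*(2*π))) := by
        apply Real.sin_nonneg_of_nonneg_of_le_pi
        · linarith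
        · linarith [hgap.2.1]
      linarith
  have hsec_val : ∀ z : Fin m, (μ (Sec (c z.val) (c (z.val+1)))).toReal = u z := by
    intro z
    have hgap := hcz z.val z.isLt
    rw [sec_measure hac hgap.1 (le_of_lt hgap.2.1), hgap.2.2, huu z]
  obtain ⟨az, haz_def⟩ : ∃ f : Fin m → ℝ, ∀ z, f z = (μ (W z)).toReal := ⟨_, fun _ => rfl⟩
  have ha_le : ∀ z, az z ≤ u z := by
    intro z
    rw [haz_def, ← hsec_val z]
    exact ENNReal.toReal_mono (measure_ne_top μ _) (measure_mono (hWsec z))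
  have hsum_ge : (1:ℝ) ≤ ∑ z : Fin m, az z := by
    have hcoverall : (univ : Set E2) ⊆ Rays ∪ ⋃ z : Fin m, W z := by
      intro θ _
      by_cases h : θ ∈ Rays
      · exact Or.inl h
      · obtain ⟨z, hz⟩ := hcover θ h
        exact Or.inr (Set.mem_iUnion.mpr ⟨z, hz⟩)
    have h1 : μ (univ : Set E2) ≤ ∑ z : Fin m, μ (W z) := by
      calc μ (univ : Set E2) ≤ μ (Rays ∪ ⋃ z : Fin m, W z) := measure_mono hcoverall
        _ ≤ μ Rays + μ (⋃ z : Fin m, W z) := measure_union_le _ _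
        _ = μ (⋃ z : Fin m, W z) := by rw [hRays0, zero_add]
        _ ≤ ∑ z : Fin m, μ (W z) := measure_iUnion_fintype_le _ _
    have hfin : (∑ z : Fin m, μ (W z)) ≠ ⊤ :=
      ne_of_lt (ENNReal.sum_lt_top.mpr (fun z _ => measure_lt_top μ _))
    have h3 := ENNReal.toReal_mono hfin h1
    rw [measure_univ, ENNReal.toReal_one,
      ENNReal.toReal_sum (fun z _ => measure_ne_top μ _)] at h3
    calc (1:ℝ) ≤ ∑ z : Fin m, (μ (W z)).toReal := h3
      _ = ∑ z : Fin m, az z := by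
          apply Finset.sum_congr rfl
          intro z _
          rw [haz_def]
  have ha_eq : ∀ z, az z = u z := by
    intro z
    refine le_antisymm (ha_le z) ?_
    have h1 : ∑ w : Fin m, az w = az z + ∑ w ∈ Finset.univ.erase z, az w :=
      (Finset.add_sum_erase _ _ (Finset.mem_univ z)).symm
    have h2 : ∑ w ∈ Finset.univ.erase z, az w ≤ ∑ w ∈ Finset.univ.erase z, u w :=
      Finset.sum_le_sum (fun w _ => ha_le w)
    have h3 : u z + ∑ w ∈ Finset.univ.erase z, u w = 1 := by
      rw [Finset.add_sum_erase _ _ (Finset.mem_univ z), husum]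
    linarith [hsum_ge]
  refine ⟨x, ?_, ?_⟩
  · intro z
    apply hball
    rw [Metric.mem_ball, dist_eq_norm, hx_def z, add_sub_cancel_left, norm_smul, norm_eVec,
      mul_one, Real.norm_eq_abs, abs_of_pos (hρpos z)]
    calc ρ z ≤ R/2 := hρle z
      _ < R := by linarith
  · intro z
    have hlow : az z ≤ (μ (cone x z)).toReal := by
      rw [haz_def]
      exact ENNReal.toReal_mono (measure_ne_top μ _) (measure_mono (hWcone z))
    have hsub : cone x z ⊆ W z ∪ Rays := by
      intro θ hθc
      by_cases hR : θ ∈ Rays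
      · exact Or.inr hR
      · obtain ⟨w, hw⟩ := hcover θ hR
        by_cases hwz : w = z
        · rw [hwz] at hw
          exact Or.inl hw
        · exact absurd hθc (hdisjcone z w hwz θ hw)
    have hup : (μ (cone x z)).toReal ≤ az z := by
      have h1 : μ (cone x z) ≤ μ (W z) := by
        calc μ (cone x z) ≤ μ (W z ∪ Rays) := measure_mono hsub
          _ ≤ μ (W z) + μ Rays := measure_union_le _ _
          _ = μ (W z) := by rw [hRays0, add_zero]
      rw [haz_def]
      exact ENNReal.toReal_mono (measure_ne_top μ _) h1
    have := ha_eq z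
    linarith
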